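/- arXiv:2211.13360 — 15 statements merged into one kernel-verified Lean document; each statement's English description precedes it below -/
import Mathlib

section
/- Let Q be a quandle. Then Q is latin (i.e., the left multiplication L_x : Q → Q, L_x(y) = x * y, is bijective for every x ∈ Q) if and only if there exists at least one x ∈ Q such that L_x is bijective. -/
/-- A quandle: a nonempty set with a binary operation satisfying idempotency,
bijectivity of all right multiplications, and right self-distributivity. -/
structure QuandleStruct (Q : Type*) where
  op : Q → Q → Q
  idem : ∀ x, op x x = x
  right_bijective : ∀ y, Function.Bijective fun x => op x y
  self_distrib : ∀ x y z, op (op x y) z = op (op x z) (op y z)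

/-- A quandle is latin (every left multiplication `L_x (y) = x * y` is bijective)
if and only if at least one left multiplication is bijective. -/
theorem stmt0 {Q : Type*} [Nonempty Q] (S : QuandleStruct Q) :
    (∀ x : Q, Function.Bijective fun y => S.op x y) ↔
      ∃ x : Q, Function.Bijective fun y => S.op x y := by
  constructor
  · intro h
    obtain ⟨a⟩ := ‹Nonempty Q›
    exact ⟨a, h a⟩
  · rintro ⟨a, ha⟩ x
    obtain ⟨w, hw⟩ := ha.surjective x
    -- x = a * w, and L_{a*w} ∘ R_w = R_w ∘ L_a
    set Rw : Q ≃ Q := Equiv.ofBijective _ (S.right_bijective w) with hRw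
    have key : (fun y => S.op x y) = ((fun t => Rw (S.op a t)) ∘ Rw.symm) := by
      funext y
      simp only [Function.comp_apply]
      have h1 : Rw (S.op a (Rw.symm y)) = S.op (S.op a (Rw.symm y)) w := rfl
      rw [h1, S.self_distrib,
        show S.op (Rw.symm y) w = Rw (Rw.symm y) from rfl, Rw.apply_symm_apply,
        show S.op a w = x from hw]
    rw [key]
    exact ((Rw.bijective.comp ha).comp Rw.symm.bijective)
end

section
/- Let Q be a quandle, n a positive integer, and x ∈ Q an element such that for every a ∈ Q there exist k with 1 ≤ k ≤ n and elements z₁, …, z_k ∈ Q with a = ((x * z₁) * z₂) * ⋯ * z_k. Then for all y, z ∈ Q there exist j with 1 ≤ j ≤ n and elements w₁, …, w_j ∈ Q such that z = ((y * w₁) * w₂) * ⋯ * w_j. -/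
private lemma hom_foldl {Q : Type*} (S : QuandleStruct Q) (f : Q → Q)
    (hf : ∀ a b, f (S.op a b) = S.op (f a) (f b)) :
    ∀ (l : List Q) (a : Q), f (l.foldl S.op a) = (l.map f).foldl S.op (f a) := by
  intro l
  induction l with
  | nil => intro a; rfl
  | cons c t ih => intro a; simp [List.foldl, ih, hf]

private lemma psi_hom {Q : Type*} (S : QuandleStruct Q) :
    ∀ (l : List Q) (a b : Q),
      l.foldl S.op (S.op a b) = S.op (l.foldl S.op a) (l.foldl S.op b) := by
  intro l
  induction l with
  | nil => intro a b; rfl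
  | cons c t ih =>
      intro a b
      simp only [List.foldl_cons]
      rw [S.self_distrib, ih]

private lemma psi_bij {Q : Type*} (S : QuandleStruct Q) :
    ∀ (l : List Q), Function.Bijective (fun a => l.foldl S.op a) := by
  intro l
  induction l with
  | nil => exact Function.bijective_id
  | cons c t ih =>
      have : (fun a => (c :: t).foldl S.op a)
          = (fun a => t.foldl S.op a) ∘ (fun a => S.op a c) := rfl
      rw [this]
      exact ih.comp (S.right_bijective c)

/-- If some `x` reaches every element of the quandle by a left-associated product of
length between 1 and `n`, then any element reaches any other element by such a product.
(Left-associated products `((y * w₁) * w₂) * ⋯ * w_j` are encoded as `List.foldl`.) -/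
theorem stmt1 {Q : Type*} (S : QuandleStruct Q) (n : ℕ) (hn : 1 ≤ n) (x : Q)
    (hx : ∀ a : Q, ∃ l : List Q, 1 ≤ l.length ∧ l.length ≤ n ∧ l.foldl S.op x = a) :
    ∀ y z : Q, ∃ l : List Q, 1 ≤ l.length ∧ l.length ≤ n ∧ l.foldl S.op y = z := by
  intro y z
  obtain ⟨l₀, -, -, hl₀⟩ := hx y
  set e : Q ≃ Q := Equiv.ofBijective _ (psi_bij S l₀) with he
  have e_app : ∀ a, e a = l₀.foldl S.op a := fun a => rfl
  have e_hom : ∀ a b, e (S.op a b) = S.op (e a) (e b) := by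
    intro a b; simp [e_app, psi_hom]
  have esymm_hom : ∀ a b, e.symm (S.op a b) = S.op (e.symm a) (e.symm b) := by
    intro a b
    apply e.injective
    rw [e_hom, e.apply_symm_apply, e.apply_symm_apply, e.apply_symm_apply]
  obtain ⟨l, h1, h2, h3⟩ := hx (e.symm z)
  refine ⟨l.map e, by simpa using h1, by simpa using h2, ?_⟩
  have := hom_foldl S e e_hom l x
  rw [h3, e.apply_symm_apply] at this
  have hex : e x = y := by rw [e_app, hl₀]
  rw [hex] at this
  exact this.symm
end

section
/- Let λ₁, λ₂ ∈ ℂ be nonzero with λ₁ ≠ λ₂, and let D(λ₁, λ₂) = diag(λ₁, λ₂). Then there exists a matrix X in the conjugacy class M_{λ₁,λ₂} of D(λ₁, λ₂) in GL(2, ℂ) satisfying X⁻¹ D(λ₂, λ₁) X = D(λ₁, λ₂) if and only if λ₁ = −λ₂. -/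
open Matrix

/-- `GL(2, ℂ)`, the group of invertible 2×2 complex matrices. -/
abbrev GL2 : Type := Matrix.GeneralLinearGroup (Fin 2) ℂ

/-- The conjugacy class of `A` in `GL(2, ℂ)`. -/
def conjClass (A : GL2) : Set GL2 := {X | ∃ P : GL2, X = P⁻¹ * A * P}

/-- For nonzero `λ₁ ≠ λ₂`, there is `X` in the conjugacy class of `diag(λ₁, λ₂)` with
`X⁻¹ • diag(λ₂, λ₁) • X = diag(λ₁, λ₂)` if and only if `λ₁ = -λ₂`. -/
theorem stmt3 (l1 l2 : ℂ) (h1 : l1 ≠ 0) (h2 : l2 ≠ 0) (hne : l1 ≠ l2)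
    (D12 D21 : GL2)
    (hD12 : (D12 : Matrix (Fin 2) (Fin 2) ℂ) = Matrix.diagonal ![l1, l2])
    (hD21 : (D21 : Matrix (Fin 2) (Fin 2) ℂ) = Matrix.diagonal ![l2, l1]) :
    (∃ X ∈ conjClass D12, X⁻¹ * D21 * X = D12) ↔ l1 = -l2 := by
  constructor
  · rintro ⟨X, ⟨P, hP⟩, hX⟩
    have h' : D21 * X = X * D12 := by
      rw [← hX]; group
    have hm : Matrix.diagonal ![l2, l1] * (X : Matrix (Fin 2) (Fin 2) ℂ)
        = (X : Matrix (Fin 2) (Fin 2) ℂ) * Matrix.diagonal ![l1, l2] := by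
      have := congrArg (Units.val) h'
      simpa [Units.val_mul, hD12, hD21] using this
    have h00 := congrFun (congrFun hm 0) 0
    have h11 := congrFun (congrFun hm 1) 1
    simp [Matrix.mul_apply, Fin.sum_univ_two, Matrix.diagonal] at h00 h11
    have hd : l1 - l2 ≠ 0 := sub_ne_zero.mpr hne
    have hx00 : (X : Matrix (Fin 2) (Fin 2) ℂ) 0 0 = 0 := by
      rcases mul_eq_zero.mp (show (X : Matrix (Fin 2) (Fin 2) ℂ) 0 0 * (l1 - l2) = 0 by
        ring_nf; linear_combination -h00) with h | h
      · exact h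
      · exact absurd h hd
    have hx11 : (X : Matrix (Fin 2) (Fin 2) ℂ) 1 1 = 0 := by
      rcases mul_eq_zero.mp (show (X : Matrix (Fin 2) (Fin 2) ℂ) 1 1 * (l1 - l2) = 0 by
        ring_nf; linear_combination h11) with h | h
      · exact h
      · exact absurd h hd
    have htr : Matrix.trace (X : Matrix (Fin 2) (Fin 2) ℂ) = l1 + l2 := by
      rw [hP]
      simp only [Units.val_mul]
      rw [Matrix.trace_units_conj' P]
      simp [hD12, Matrix.trace_diagonal, Fin.sum_univ_two]
    have htr0 : Matrix.trace (X : Matrix (Fin 2) (Fin 2) ℂ) = 0 := by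
      simp [Matrix.trace, Fin.sum_univ_two, Matrix.diag, hx00, hx11]
    rw [htr0] at htr
    exact eq_neg_of_add_eq_zero_left htr.symm
  · intro h
    have hl2 : l2 = -l1 := by rw [h]; ring
    subst hl2
    set S : Matrix (Fin 2) (Fin 2) ℂ := !![0, l1; l1, 0] with hS
    set Sinv : Matrix (Fin 2) (Fin 2) ℂ := !![0, l1⁻¹; l1⁻¹, 0] with hSinv
    set Pm : Matrix (Fin 2) (Fin 2) ℂ := !![1, 1; 1, -1] with hPm
    set Pinv : Matrix (Fin 2) (Fin 2) ℂ := !![1/2, 1/2; 1/2, -1/2] with hPinv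
    have hS1 : S * Sinv = 1 := by
      ext i j; fin_cases i <;> fin_cases j <;>
        simp [hS, hSinv, Matrix.mul_apply, Fin.sum_univ_two, Matrix.one_apply] <;>
        field_simp
    have hS2 : Sinv * S = 1 := by
      ext i j; fin_cases i <;> fin_cases j <;>
        simp [hS, hSinv, Matrix.mul_apply, Fin.sum_univ_two, Matrix.one_apply] <;>
        field_simp
    have hP1 : Pm * Pinv = 1 := by
      ext i j; fin_cases i <;> fin_cases j <;>
        simp [hPm, hPinv, Matrix.mul_apply, Fin.sum_univ_two, Matrix.one_apply] <;>
        ring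
    have hP2 : Pinv * Pm = 1 := by
      ext i j; fin_cases i <;> fin_cases j <;>
        simp [hPm, hPinv, Matrix.mul_apply, Fin.sum_univ_two, Matrix.one_apply] <;>
        ring
    have hdiag : ∀ a b : ℂ, Matrix.diagonal ![a, b] = !![a, 0; 0, b] := by
      intro a b
      ext i j
      fin_cases i <;> fin_cases j <;>
        simp [Matrix.diagonal_apply]
    rw [hdiag] at hD12 hD21
    refine ⟨⟨S, Sinv, hS1, hS2⟩, ⟨(⟨Pm, Pinv, hP1, hP2⟩ : GL2)⁻¹, ?_⟩, ?_⟩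
    · apply Units.ext
      show S = Pm * (D12 : Matrix (Fin 2) (Fin 2) ℂ) * Pinv
      rw [hD12]
      ext i j; fin_cases i <;> fin_cases j <;>
        simp [hS, hPm, hPinv, Matrix.mul_apply, Fin.sum_univ_two] <;>
        ring
    · apply Units.ext
      show Sinv * (D21 : Matrix (Fin 2) (Fin 2) ℂ) * S = (D12 : Matrix (Fin 2) (Fin 2) ℂ)
      rw [hD12, hD21]
      ext i j; fin_cases i <;> fin_cases j <;>
        simp [hS, hSinv, Matrix.mul_apply, Fin.sum_univ_two]
end

section
/- Let λ₁, λ₂ ∈ ℂ be nonzero with λ₁ ≠ λ₂ and λ₁ ≠ −λ₂. Then the conjugacy class M_{λ₁,λ₂} of D(λ₁, λ₂) = diag(λ₁, λ₂) in GL(2, ℂ), viewed as a quandle under conjugation, is 2-connected: (a) it is not 1-connected, i.e., there exist A, B ∈ M_{λ₁,λ₂} such that B ≠ X⁻¹ A X for every X ∈ M_{λ₁,λ₂}; and (b) for all A, B ∈ M_{λ₁,λ₂} there exist X, Y ∈ M_{λ₁,λ₂} with either B = X⁻¹ A X or B = Y⁻¹ X⁻¹ A X Y. -/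
open Matrix

noncomputable def toGL (M : Matrix (Fin 2) (Fin 2) ℂ) (h : M.det ≠ 0) : GL2 :=
  Matrix.GeneralLinearGroup.mkOfDetNeZero M h

@[simp] lemma toGL_coe (M : Matrix (Fin 2) (Fin 2) ℂ) (h : M.det ≠ 0) :
    (toGL M h : Matrix (Fin 2) (Fin 2) ℂ) = M := rfl

lemma diag_two (a b : ℂ) : Matrix.diagonal ![a, b] = !![a, 0; 0, b] := by
  ext i j
  fin_cases i <;> fin_cases j <;> simp [Matrix.diagonal]

lemma conj_helper (D M : GL2) (T : Matrix (Fin 2) (Fin 2) ℂ) (hT : T.det ≠ 0)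
    (h : T * (M : Matrix (Fin 2) (Fin 2) ℂ) = (D : Matrix (Fin 2) (Fin 2) ℂ) * T) :
    M ∈ conjClass D := by
  refine ⟨toGL T hT, ?_⟩
  have hP : toGL T hT * M = D * toGL T hT := Units.ext (by simpa using h)
  rw [mul_assoc, ← hP, ← mul_assoc, inv_mul_cancel, one_mul]

lemma mem_conj (D G P : GL2) (h : G ∈ conjClass D) : P⁻¹ * G * P ∈ conjClass D := by
  obtain ⟨R, rfl⟩ := h
  exact ⟨R * P, by group⟩

lemma trace_of_mem (D X : GL2) (h : X ∈ conjClass D) :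
    Matrix.trace (X : Matrix (Fin 2) (Fin 2) ℂ) =
      Matrix.trace (D : Matrix (Fin 2) (Fin 2) ℂ) := by
  obtain ⟨P, rfl⟩ := h
  have h1 : ((P⁻¹ * D * P : GL2) : Matrix (Fin 2) (Fin 2) ℂ)
      = (P⁻¹ : GL2) * (D : Matrix (Fin 2) (Fin 2) ℂ) * (P : GL2) := rfl
  rw [h1, Matrix.trace_mul_cycle]
  have h2 : ((P : GL2) : Matrix (Fin 2) (Fin 2) ℂ) * ((P⁻¹ : GL2) : Matrix (Fin 2) (Fin 2) ℂ)
      = 1 := by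
    rw [← Units.val_mul, mul_inv_cancel, Units.val_one]
  rw [h2, one_mul]

/-- Any element of `GL(2,ℂ)` with the right trace and determinant is conjugate to `D`. -/
lemma mem_of_trace_det (l1 l2 : ℂ) (hl : l1 ≠ l2) (D : GL2)
    (hD : (D : Matrix (Fin 2) (Fin 2) ℂ) = !![l1, 0; 0, l2]) (M : GL2)
    (ht : Matrix.trace (M : Matrix (Fin 2) (Fin 2) ℂ) = l1 + l2)
    (hdet : Matrix.det (M : Matrix (Fin 2) (Fin 2) ℂ) = l1 * l2) :
    M ∈ conjClass D := by
  set a := (M : Matrix (Fin 2) (Fin 2) ℂ) 0 0 with ha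
  set b := (M : Matrix (Fin 2) (Fin 2) ℂ) 0 1 with hb
  set c := (M : Matrix (Fin 2) (Fin 2) ℂ) 1 0 with hc
  set d := (M : Matrix (Fin 2) (Fin 2) ℂ) 1 1 with hd
  have hM : (M : Matrix (Fin 2) (Fin 2) ℂ) = !![a, b; c, d] := Matrix.eta_fin_two _
  rw [Matrix.trace_fin_two] at ht
  rw [hM, Matrix.det_fin_two_of] at hdet
  by_cases hc0 : c ≠ 0
  · apply conj_helper D M !![c, l1 - a; c, l2 - a]
    · rw [Matrix.det_fin_two_of]
      have : c * (l2 - a) - (l1 - a) * c = c * (l2 - l1) := by ring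
      rw [this]
      exact mul_ne_zero hc0 (sub_ne_zero.mpr (Ne.symm hl))
    · rw [hM, hD, Matrix.mul_fin_two, Matrix.mul_fin_two]
      ext i j
      fin_cases i <;> fin_cases j <;> simp <;>
        first
        | linear_combination
        | linear_combination hdet - l1 * ht
        | linear_combination hdet - l2 * ht
        | linear_combination l1 * ht - hdet
        | linear_combination l2 * ht - hdet
  · push_neg at hc0
    by_cases hb0 : b ≠ 0
    · apply conj_helper D M !![l1 - d, b; l2 - d, b]
      · rw [Matrix.det_fin_two_of]
        have : (l1 - d) * b - b * (l2 - d) = b * (l1 - l2) := by ring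
        rw [this]
        exact mul_ne_zero hb0 (sub_ne_zero.mpr hl)
      · rw [hM, hD, Matrix.mul_fin_two, Matrix.mul_fin_two]
        ext i j
        fin_cases i <;> fin_cases j <;> simp <;>
          first
          | linear_combination
          | linear_combination hdet - l1 * ht
          | linear_combination hdet - l2 * ht
          | linear_combination l1 * ht - hdet
          | linear_combination l2 * ht - hdet
    · push_neg at hb0
      have key : (a - l1) * (a - l2) = 0 := by
        linear_combination a * ht - hdet - c * hb0
      rcases mul_eq_zero.mp key with h' | h'
      · have ha1 : a = l1 := by linear_combination h'
        have hd1 : d = l2 := by linear_combination ht - h'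
        apply conj_helper D M 1 (by simp)
        rw [hM, hD, one_mul, mul_one, ha1, hd1, hb0, hc0]
      · have ha1 : a = l2 := by linear_combination h'
        have hd1 : d = l1 := by linear_combination ht - h'
        apply conj_helper D M !![0, 1; 1, 0]
        · rw [Matrix.det_fin_two_of]; norm_num
        · rw [hM, hD, Matrix.mul_fin_two, Matrix.mul_fin_two]
          ext i j
          fin_cases i <;> fin_cases j <;> simp [ha1, hd1] <;>
            first
            | linear_combination hb0
            | linear_combination hc0
            | linear_combination

lemma conj_eq_of_comm (D P Q G : GL2)
    (h : D * (G * (P * Q⁻¹)) = (G * (P * Q⁻¹)) * D) :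
    (P⁻¹ * G * P)⁻¹ * (P⁻¹ * D * P) * (P⁻¹ * G * P) = Q⁻¹ * D * Q := by
  have h2 : G⁻¹ * (D * G) = P * (Q⁻¹ * (D * (P * Q⁻¹)⁻¹)) := by
    have h3 := congrArg (fun z => G⁻¹ * z * (P * Q⁻¹)⁻¹) h
    simp only [mul_assoc, mul_inv_cancel, mul_one, inv_mul_cancel_left] at h3
    exact h3
  calc (P⁻¹ * G * P)⁻¹ * (P⁻¹ * D * P) * (P⁻¹ * G * P)
      = P⁻¹ * (G⁻¹ * (D * G)) * P := by group
    _ = P⁻¹ * (P * (Q⁻¹ * (D * (P * Q⁻¹)⁻¹))) * P := by rw [h2]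
    _ = Q⁻¹ * D * Q := by group

lemma key_step (l1 l2 : ℂ) (D P Q G : GL2)
    (hD : (D : Matrix (Fin 2) (Fin 2) ℂ) = Matrix.diagonal ![l1, l2])
    (z1 z2 : ℂ)
    (hG : (G : Matrix (Fin 2) (Fin 2) ℂ)
      = Matrix.diagonal ![z1, z2] * ((Q * P⁻¹ : GL2) : Matrix (Fin 2) (Fin 2) ℂ)) :
    (P⁻¹ * G * P)⁻¹ * (P⁻¹ * D * P) * (P⁻¹ * G * P) = Q⁻¹ * D * Q := by
  apply conj_eq_of_comm
  apply Units.ext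
  have hK : ((G * (P * Q⁻¹) : GL2) : Matrix (Fin 2) (Fin 2) ℂ)
      = Matrix.diagonal ![z1, z2] := by
    have h1 : (Q * P⁻¹ : GL2) * (P * Q⁻¹) = 1 := by group
    calc ((G * (P * Q⁻¹) : GL2) : Matrix (Fin 2) (Fin 2) ℂ)
        = (G : Matrix (Fin 2) (Fin 2) ℂ) * ((P * Q⁻¹ : GL2) : Matrix (Fin 2) (Fin 2) ℂ) := rfl
      _ = Matrix.diagonal ![z1, z2] *
            (((Q * P⁻¹ : GL2) : Matrix (Fin 2) (Fin 2) ℂ) *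
              ((P * Q⁻¹ : GL2) : Matrix (Fin 2) (Fin 2) ℂ)) := by
          rw [hG, mul_assoc]
      _ = Matrix.diagonal ![z1, z2] := by
          rw [← Units.val_mul, h1, Units.val_one, mul_one]
  simp only [Units.val_mul] at hK ⊢
  rw [hK, hD, Matrix.diagonal_mul_diagonal, Matrix.diagonal_mul_diagonal]
  exact congrArg Matrix.diagonal (funext fun i => mul_comm _ _)

lemma exists_z (s p e n00 n11 : ℂ) (hs : s ≠ 0) (hp : p ≠ 0) (he : e ≠ 0)
    (hn : n00 ≠ 0 ∨ n11 ≠ 0) :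
    ∃ z1 z2 : ℂ, z1 ≠ 0 ∧ z2 ≠ 0 ∧ z1 * n00 + z2 * n11 = s ∧ z1 * z2 * e = p := by
  by_cases h0 : n00 = 0
  · have h1 : n11 ≠ 0 := by tauto
    refine ⟨p * n11 / (s * e), s / n11, ?_, ?_, ?_, ?_⟩
    · exact div_ne_zero (mul_ne_zero hp h1) (mul_ne_zero hs he)
    · exact div_ne_zero hs h1
    · rw [h0]; field_simp; ring
    · field_simp
  · by_cases h1 : n11 = 0
    · refine ⟨s / n00, p * n00 / (s * e), ?_, ?_, ?_, ?_⟩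
      · exact div_ne_zero hs h0
      · exact div_ne_zero (mul_ne_zero hp h0) (mul_ne_zero hs he)
      · rw [h1]; field_simp; ring
      · field_simp
    · obtain ⟨r, hr⟩ := IsAlgClosed.exists_pow_nat_eq
        (s ^ 2 - 4 * (p * n00 * n11 / e)) (n := 2) (by norm_num)
      set u := (s + r) / 2 with hudef
      have hm : p * n00 * n11 / e ≠ 0 :=
        div_ne_zero (mul_ne_zero (mul_ne_zero hp h0) h1) he
      have hu : u * (s - u) = p * n00 * n11 / e := by
        rw [hudef]; linear_combination (-1/4 : ℂ) * hr
      have hu0 : u ≠ 0 := by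
        intro h'; apply hm; rw [← hu, h', zero_mul]
      have hsu : s - u ≠ 0 := by
        intro h'; apply hm; rw [← hu, h', mul_zero]
      refine ⟨u / n00, (s - u) / n11, div_ne_zero hu0 h0, div_ne_zero hsu h1, ?_, ?_⟩
      · field_simp; ring
      · have hu' : u * (s - u) * e = p * n00 * n11 := by
          field_simp at hu; linear_combination hu
        field_simp
        linear_combination hu'


/-- For nonzero `λ₁, λ₂` with `λ₁ ≠ λ₂` and `λ₁ ≠ -λ₂`, the conjugacy class of
`diag(λ₁, λ₂)` is a 2-connected quandle under conjugation: it is not 1-connected, and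
any two of its elements are linked by at most two right multiplications. -/
theorem stmt4 (l1 l2 : ℂ) (h1 : l1 ≠ 0) (h2 : l2 ≠ 0) (hne : l1 ≠ l2) (hne' : l1 ≠ -l2)
    (D : GL2) (hD : (D : Matrix (Fin 2) (Fin 2) ℂ) = Matrix.diagonal ![l1, l2]) :
    (∃ A ∈ conjClass D, ∃ B ∈ conjClass D, ∀ X ∈ conjClass D, X⁻¹ * A * X ≠ B) ∧
      (∀ A ∈ conjClass D, ∀ B ∈ conjClass D, ∃ X ∈ conjClass D, ∃ Y ∈ conjClass D,
        X⁻¹ * A * X = B ∨ Y⁻¹ * (X⁻¹ * A * X) * Y = B) := by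
  have hs : l1 + l2 ≠ 0 := fun h => hne' (by linear_combination h)
  have hp : l1 * l2 ≠ 0 := mul_ne_zero h1 h2
  have hD' : (D : Matrix (Fin 2) (Fin 2) ℂ) = !![l1, 0; 0, l2] := by rw [hD, diag_two]
  constructor
  · -- Part (a): not 1-connected
    refine ⟨D, ⟨1, by simp⟩, ?_⟩
    have hWdet : (!![0, 1; 1, 0] : Matrix (Fin 2) (Fin 2) ℂ).det ≠ 0 := by
      rw [Matrix.det_fin_two_of]; norm_num
    set W : GL2 := toGL !![0, 1; 1, 0] hWdet with hWdef
    refine ⟨W⁻¹ * D * W, ⟨W, rfl⟩, ?_⟩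
    intro X hX h
    have hcomm : D * (X * W⁻¹) = (X * W⁻¹) * D := by
      calc D * (X * W⁻¹) = X * (X⁻¹ * D * X) * W⁻¹ := by group
        _ = X * (W⁻¹ * D * W) * W⁻¹ := by rw [h]
        _ = (X * W⁻¹) * D := by group
    have h3 : (D : Matrix (Fin 2) (Fin 2) ℂ) * ((X * W⁻¹ : GL2) : Matrix (Fin 2) (Fin 2) ℂ)
        = ((X * W⁻¹ : GL2) : Matrix (Fin 2) (Fin 2) ℂ) * (D : Matrix (Fin 2) (Fin 2) ℂ) := by
      rw [← Units.val_mul, ← Units.val_mul, hcomm]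
    set u := ((X * W⁻¹ : GL2) : Matrix (Fin 2) (Fin 2) ℂ) with hudef
    have e01 : l1 * u 0 1 = u 0 1 * l2 := by
      have := congrFun (congrFun h3 0) 1
      rw [hD'] at this
      simpa [Matrix.mul_apply, Fin.sum_univ_two] using this
    have e10 : l2 * u 1 0 = u 1 0 * l1 := by
      have := congrFun (congrFun h3 1) 0
      rw [hD'] at this
      simpa [Matrix.mul_apply, Fin.sum_univ_two] using this
    have hu01 : u 0 1 = 0 := by
      have hz : u 0 1 * (l1 - l2) = 0 := by linear_combination e01
      rcases mul_eq_zero.mp hz with h' | h'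
      · exact h'
      · exact absurd (sub_eq_zero.mp h') hne
    have hu10 : u 1 0 = 0 := by
      have hz : u 1 0 * (l1 - l2) = 0 := by linear_combination -e10
      rcases mul_eq_zero.mp hz with h' | h'
      · exact h'
      · exact absurd (sub_eq_zero.mp h') hne
    have hXeq : X = (X * W⁻¹) * W := by group
    have hXmat : (X : Matrix (Fin 2) (Fin 2) ℂ) = u * !![0, 1; 1, 0] := by
      conv_lhs => rw [hXeq]
      rw [Units.val_mul]
      rfl
    have htr : Matrix.trace (X : Matrix (Fin 2) (Fin 2) ℂ) = 0 := by
      rw [hXmat, Matrix.trace_fin_two]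
      simp [Matrix.mul_apply, Fin.sum_univ_two, hu01, hu10]
    have htr2 := trace_of_mem D X hX
    rw [htr, hD', Matrix.trace_fin_two] at htr2
    simp at htr2
    exact hs (by linear_combination -htr2)
  · -- Part (b): two steps suffice
    rintro A ⟨P, rfl⟩ B ⟨Q, rfl⟩
    set n := ((Q * P⁻¹ : GL2) : Matrix (Fin 2) (Fin 2) ℂ) with hndef
    have he : n.det ≠ 0 := by
      have : IsUnit n.det := (Matrix.isUnit_iff_isUnit_det n).mp (Q * P⁻¹).isUnit
      exact this.ne_zero
    by_cases hcase : n 0 0 = 0 ∧ n 1 1 = 0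
    · -- antidiagonal case: two steps
      obtain ⟨h00, h11⟩ := hcase
      have hdet2 : n.det = n 0 0 * n 1 1 - n 0 1 * n 1 0 := Matrix.det_fin_two n
      have hβ : n 0 1 ≠ 0 := by
        intro h'; apply he; rw [hdet2, h00, h']; ring
      have hγ : n 1 0 ≠ 0 := by
        intro h'; apply he; rw [hdet2, h00, h']; ring
      have hGdet : (!![l1, l1; 0, l2] : Matrix (Fin 2) (Fin 2) ℂ).det ≠ 0 := by
        rw [Matrix.det_fin_two_of]; simpa using hp
      set G : GL2 := toGL !![l1, l1; 0, l2] hGdet with hGdef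
      have hHdet : (!![l1 + l2, l1 * l2 / (l1 + l2); -(l1 + l2), 0] :
          Matrix (Fin 2) (Fin 2) ℂ).det ≠ 0 := by
        rw [Matrix.det_fin_two_of]
        have hval : (l1 + l2) * 0 - l1 * l2 / (l1 + l2) * -(l1 + l2) = l1 * l2 := by
          field_simp
          ring
        rw [hval]; exact hp
      set H : GL2 := toGL !![l1 + l2, l1 * l2 / (l1 + l2); -(l1 + l2), 0] hHdet with hHdef
      have hGC : G ∈ conjClass D := by
        apply mem_of_trace_det l1 l2 hne D hD'
        · show Matrix.trace (!![l1, l1; 0, l2] : Matrix (Fin 2) (Fin 2) ℂ) = l1 + l2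
          rw [Matrix.trace_fin_two]; simp
        · show (!![l1, l1; 0, l2] : Matrix (Fin 2) (Fin 2) ℂ).det = l1 * l2
          rw [Matrix.det_fin_two_of]; ring
      have hHC : H ∈ conjClass D := by
        apply mem_of_trace_det l1 l2 hne D hD'
        · show Matrix.trace (!![l1 + l2, l1 * l2 / (l1 + l2); -(l1 + l2), 0] :
            Matrix (Fin 2) (Fin 2) ℂ) = l1 + l2
          rw [Matrix.trace_fin_two]; simp
        · show (!![l1 + l2, l1 * l2 / (l1 + l2); -(l1 + l2), 0] :
            Matrix (Fin 2) (Fin 2) ℂ).det = l1 * l2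
          rw [Matrix.det_fin_two_of]
          field_simp
          ring
      have hneta : n = !![0, n 0 1; n 1 0, 0] := by
        conv_lhs => rw [Matrix.eta_fin_two n]
        rw [h00, h11]
      have hGH : ((G * H : GL2) : Matrix (Fin 2) (Fin 2) ℂ)
          = Matrix.diagonal ![l1 * (l1 * l2) / ((l1 + l2) * n 0 1),
              -(l2 * (l1 + l2)) / n 1 0] * ((Q * P⁻¹ : GL2) : Matrix (Fin 2) (Fin 2) ℂ) := by
        rw [← hndef]
        have hc : ((G * H : GL2) : Matrix (Fin 2) (Fin 2) ℂ)
            = (!![l1, l1; 0, l2] : Matrix (Fin 2) (Fin 2) ℂ) *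
              !![l1 + l2, l1 * l2 / (l1 + l2); -(l1 + l2), 0] := rfl
        rw [hc, Matrix.mul_fin_two]
        conv_rhs => rw [hneta]
        rw [diag_two, Matrix.mul_fin_two]
        ext i j
        fin_cases i <;> fin_cases j <;> simp <;>
          first
          | (field_simp; ring)
          | field_simp
          | ring
      refine ⟨P⁻¹ * G * P, mem_conj D G P hGC, P⁻¹ * H * P, mem_conj D H P hHC, Or.inr ?_⟩
      have hmain := key_step l1 l2 D P Q (G * H) hD _ _ hGH
      calc (P⁻¹ * H * P)⁻¹ * ((P⁻¹ * G * P)⁻¹ * (P⁻¹ * D * P) * (P⁻¹ * G * P)) * (P⁻¹ * H * P)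
          = (P⁻¹ * (G * H) * P)⁻¹ * (P⁻¹ * D * P) * (P⁻¹ * (G * H) * P) := by group
        _ = Q⁻¹ * D * Q := hmain
    · -- one step suffices
      have hn' : n 0 0 ≠ 0 ∨ n 1 1 ≠ 0 := by tauto
      obtain ⟨z1, z2, hz1, hz2, hsum, hprod⟩ :=
        exists_z (l1 + l2) (l1 * l2) n.det (n 0 0) (n 1 1) hs hp he hn'
      have hdetZ : (Matrix.diagonal ![z1, z2] * n).det ≠ 0 := by
        rw [Matrix.det_mul, Matrix.det_diagonal, Fin.prod_univ_two]
        have : ![z1, z2] 0 * ![z1, z2] 1 * n.det = z1 * z2 * n.det := by simp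
        rw [this, hprod]; exact hp
      set G : GL2 := toGL (Matrix.diagonal ![z1, z2] * n) hdetZ with hGdef
      have hGC : G ∈ conjClass D := by
        apply mem_of_trace_det l1 l2 hne D hD'
        · show Matrix.trace (Matrix.diagonal ![z1, z2] * n) = l1 + l2
          rw [Matrix.trace_fin_two, Matrix.diagonal_mul, Matrix.diagonal_mul]
          simpa using hsum
        · show (Matrix.diagonal ![z1, z2] * n).det = l1 * l2
          rw [Matrix.det_mul, Matrix.det_diagonal, Fin.prod_univ_two]
          have : ![z1, z2] 0 * ![z1, z2] 1 * n.det = z1 * z2 * n.det := by simp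
          rw [this]; exact hprod
      refine ⟨P⁻¹ * G * P, mem_conj D G P hGC, P⁻¹ * G * P, mem_conj D G P hGC, Or.inl ?_⟩
      exact key_step l1 l2 D P Q G hD z1 z2 (by rw [← hndef]; rfl)
end

section
/- Let λ ∈ ℂ be nonzero. Then the conjugacy class M_{λ,−λ} of diag(λ, −λ) in GL(2, ℂ), viewed as a quandle under conjugation, is 2-connected: (a) it is not 1-connected, i.e., there exist A, B ∈ M_{λ,−λ} such that B ≠ X⁻¹ A X for every X ∈ M_{λ,−λ}; and (b) for all A, B ∈ M_{λ,−λ} there exist X, Y ∈ M_{λ,−λ} with either B = X⁻¹ A X or B = Y⁻¹ X⁻¹ A X Y. -/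
open Matrix

namespace Stmt5Aux

noncomputable def mk2 (m : Matrix (Fin 2) (Fin 2) ℂ) (h : m.det ≠ 0) : GL2 :=
  Matrix.GeneralLinearGroup.mkOfDetNeZero m h

lemma mk2_coe (m : Matrix (Fin 2) (Fin 2) ℂ) (h : m.det ≠ 0) :
    (mk2 m h : Matrix (Fin 2) (Fin 2) ℂ) = m := rfl

lemma conj_iff (X M N : GL2) : X⁻¹ * M * X = N ↔ M * X = X * N := by
  rw [mul_assoc, inv_mul_eq_iff_eq_mul]

lemma coe_eq (M N : GL2) (h : (M : Matrix (Fin 2) (Fin 2) ℂ) = N) : M = N := Units.ext h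

lemma mat2_ext {x11 x12 x21 x22 y11 y12 y21 y22 : ℂ} (h11 : x11 = y11) (h12 : x12 = y12)
    (h21 : x21 = y21) (h22 : x22 = y22) :
    !![x11, x12; x21, x22] = !![y11, y12; y21, y22] := by
  rw [h11, h12, h21, h22]

section

variable {l : ℂ} {D : GL2}

lemma hDm (hD : (D : Matrix (Fin 2) (Fin 2) ℂ) = Matrix.diagonal ![l, -l]) : (D : Matrix (Fin 2) (Fin 2) ℂ) = !![l, 0; 0, -l] := by
  rw [hD]
  ext i j
  fin_cases i <;> fin_cases j <;> simp [Matrix.diagonal_apply]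

lemma mem_trace_det (hD : (D : Matrix (Fin 2) (Fin 2) ℂ) = Matrix.diagonal ![l, -l]) {M : GL2} (hM : M ∈ conjClass D) :
    (M : Matrix (Fin 2) (Fin 2) ℂ) 0 0 + (M : Matrix (Fin 2) (Fin 2) ℂ) 1 1 = 0 ∧
    (M : Matrix (Fin 2) (Fin 2) ℂ).det = -l ^ 2 := by
  obtain ⟨P, rfl⟩ := hM
  have hc : ((P⁻¹ * D * P : GL2) : Matrix (Fin 2) (Fin 2) ℂ)
      = ((P : Matrix (Fin 2) (Fin 2) ℂ))⁻¹ * D * P := by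
    simp [Matrix.coe_units_inv]
  have hPunit : IsUnit ((P : Matrix (Fin 2) (Fin 2) ℂ)).det :=
    (Matrix.isUnit_iff_isUnit_det _).mp P.isUnit
  constructor
  · have ht : ((P⁻¹ * D * P : GL2) : Matrix (Fin 2) (Fin 2) ℂ).trace
        = ((D : Matrix (Fin 2) (Fin 2) ℂ)).trace := by
      rw [hc, Matrix.trace_mul_cycle, Matrix.mul_nonsing_inv _ hPunit, one_mul]
    rw [Matrix.trace_fin_two, Matrix.trace_fin_two, hDm hD] at ht
    simpa using ht
  · have h0 : ((P : Matrix (Fin 2) (Fin 2) ℂ)).det ≠ 0 := hPunit.ne_zero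
    rw [hc, Matrix.det_mul, Matrix.det_mul, Matrix.det_nonsing_inv, hDm hD,
      Matrix.det_fin_two_of, Ring.inverse_eq_inv']
    field_simp
    ring

lemma mem_of_rel {M : GL2} (R : Matrix (Fin 2) (Fin 2) ℂ) (hR : R.det ≠ 0)
    (hcomm : R * (M : Matrix (Fin 2) (Fin 2) ℂ) = (D : Matrix (Fin 2) (Fin 2) ℂ) * R) :
    M ∈ conjClass D := by
  refine ⟨mk2 R hR, ?_⟩
  have h1 : mk2 R hR * M = D * mk2 R hR := by
    apply coe_eq
    simpa [mk2_coe] using hcomm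
  rw [mul_assoc]
  exact eq_inv_mul_iff_mul_eq.mpr h1

lemma mem_of_entries (hl : l ≠ 0) (hD : (D : Matrix (Fin 2) (Fin 2) ℂ) = Matrix.diagonal ![l, -l]) (a b c : ℂ) (he : a ^ 2 + b * c = l ^ 2) (M : GL2)
    (hm : (M : Matrix (Fin 2) (Fin 2) ℂ) = !![a, b; c, -a]) : M ∈ conjClass D := by
  by_cases hc0 : c = 0
  · have hfac : (a - l) * (a + l) = 0 := by linear_combination he - b * hc0
    rcases mul_eq_zero.mp hfac with h | h
    · have ha : a = l := by linear_combination h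
      refine mem_of_rel !![2 * l, b; 0, 1] ?_ ?_
      · rw [Matrix.det_fin_two_of]
        intro h0
        exact hl (by linear_combination h0 / 2)
      · rw [hm, hDm hD, Matrix.mul_fin_two, Matrix.mul_fin_two]
        exact mat2_ext (by linear_combination 2 * l * ha + b * hc0) (by linear_combination -b * ha)
          (by linear_combination hc0) (by linear_combination -ha)
    · have ha : a = -l := by linear_combination h
      refine mem_of_rel !![0, 1; 2 * l, -b] ?_ ?_
      · rw [Matrix.det_fin_two_of]
        intro h0
        exact hl (by linear_combination -h0 / 2)
      · rw [hm, hDm hD, Matrix.mul_fin_two, Matrix.mul_fin_two]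
        exact mat2_ext (by linear_combination hc0) (by linear_combination -ha)
          (by linear_combination 2 * l * ha - b * hc0) (by linear_combination b * ha)
  · refine mem_of_rel !![c, l - a; c, -l - a] ?_ ?_
    · rw [Matrix.det_fin_two_of]
      intro h0
      have h2 : (-2 * l) * c = 0 := by linear_combination h0
      rcases mul_eq_zero.mp h2 with h | h
      · exact hl (by linear_combination -h / 2)
      · exact hc0 h
    · rw [hm, hDm hD, Matrix.mul_fin_two, Matrix.mul_fin_two]
      exact mat2_ext (by ring) (by linear_combination he) (by ring) (by linear_combination he)

lemma mem_of_trace_det (hl : l ≠ 0) (hD : (D : Matrix (Fin 2) (Fin 2) ℂ) = Matrix.diagonal ![l, -l]) {M : GL2}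
    (h1 : (M : Matrix (Fin 2) (Fin 2) ℂ) 0 0 + (M : Matrix (Fin 2) (Fin 2) ℂ) 1 1 = 0)
    (h2 : (M : Matrix (Fin 2) (Fin 2) ℂ).det = -l ^ 2) : M ∈ conjClass D := by
  have hd : (M : Matrix (Fin 2) (Fin 2) ℂ) 1 1 = -((M : Matrix (Fin 2) (Fin 2) ℂ) 0 0) := by
    linear_combination h1
  have hm : (M : Matrix (Fin 2) (Fin 2) ℂ)
      = !![(M : Matrix (Fin 2) (Fin 2) ℂ) 0 0, (M : Matrix (Fin 2) (Fin 2) ℂ) 0 1;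
          (M : Matrix (Fin 2) (Fin 2) ℂ) 1 0, -((M : Matrix (Fin 2) (Fin 2) ℂ) 0 0)] := by
    rw [← hd]
    exact Matrix.eta_fin_two _
  have he : ((M : Matrix (Fin 2) (Fin 2) ℂ) 0 0) ^ 2
      + (M : Matrix (Fin 2) (Fin 2) ℂ) 0 1 * (M : Matrix (Fin 2) (Fin 2) ℂ) 1 0 = l ^ 2 := by
    rw [hm, Matrix.det_fin_two_of] at h2
    linear_combination -h2
  exact mem_of_entries hl hD _ _ _ he M hm

lemma one_step (hl : l ≠ 0) (hD : (D : Matrix (Fin 2) (Fin 2) ℂ) = Matrix.diagonal ![l, -l])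
    {B : GL2} (hB : B ∈ conjClass D)
    (hp : (B : Matrix (Fin 2) (Fin 2) ℂ) 0 0 ≠ -l) :
    ∃ X ∈ conjClass D, X⁻¹ * D * X = B := by
  obtain ⟨ht, hdet⟩ := mem_trace_det hD hB
  obtain ⟨p, q, r, d, hm0⟩ : ∃ p q r d, (B : Matrix (Fin 2) (Fin 2) ℂ) = !![p, q; r, d] :=
    ⟨_, _, _, _, Matrix.eta_fin_two _⟩
  have hp2 : p ≠ -l := by rw [hm0] at hp; simpa using hp
  rw [hm0] at ht hdet
  have ht2 : p + d = 0 := by simpa using ht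
  rw [Matrix.det_fin_two_of] at hdet
  have hdd : d = -p := by linear_combination ht2
  subst hdd
  have he : p ^ 2 + q * r = l ^ 2 := by linear_combination -hdet
  have hlp : l + p ≠ 0 := fun h0 => hp2 (by linear_combination h0)
  obtain ⟨a, ha⟩ := IsAlgClosed.exists_pow_nat_eq (l * (l + p) / 2) (n := 2) (by norm_num)
  have ha0 : a ≠ 0 := by
    intro h0
    rw [h0] at ha
    have h2 : l * (l + p) = 0 := by linear_combination -2 * ha
    rcases mul_eq_zero.mp h2 with h | h
    · exact hl h
    · exact hlp h
  have he' : a ^ 2 + (l * q / (2 * a)) * (l * r / (2 * a)) = l ^ 2 := by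
    field_simp
    linear_combination (2 * a ^ 2 - l * (l - p)) * 2 * ha + l ^ 2 * he
  have hxdet : (!![a, l * q / (2 * a); l * r / (2 * a), -a]).det ≠ 0 := by
    rw [Matrix.det_fin_two_of]
    intro h0
    have hl2 : l ^ 2 = 0 := by linear_combination -he' - h0
    exact hl (pow_eq_zero_iff two_ne_zero |>.mp hl2)
  refine ⟨mk2 _ hxdet, mem_of_entries hl hD _ _ _ he' _ (mk2_coe _ _), ?_⟩
  rw [conj_iff]
  apply coe_eq
  show ((D * mk2 _ hxdet : GL2) : Matrix (Fin 2) (Fin 2) ℂ) = ((mk2 _ hxdet * B : GL2) : _)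
  rw [Units.val_mul, Units.val_mul, mk2_coe, hm0, hDm hD, Matrix.mul_fin_two,
    Matrix.mul_fin_two]
  refine mat2_ext ?_ ?_ ?_ ?_
  · field_simp
    linear_combination 2 * (l - p) * ha - l * he
  · field_simp
    linear_combination -2 * q * ha
  · field_simp
    linear_combination 2 * r * ha
  · field_simp
    linear_combination 2 * (l - p) * ha - l * he

lemma neg_step (hl : l ≠ 0) (hD : (D : Matrix (Fin 2) (Fin 2) ℂ) = Matrix.diagonal ![l, -l]) :
    ∃ X ∈ conjClass D, X⁻¹ * D * X = -D := by
  have hdet : (!![0, 1; l ^ 2, 0] : Matrix (Fin 2) (Fin 2) ℂ).det ≠ 0 := by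
    rw [Matrix.det_fin_two_of]
    intro h0
    exact hl (pow_eq_zero_iff two_ne_zero |>.mp (by linear_combination -h0))
  have hmem : mk2 _ hdet ∈ conjClass D :=
    mem_of_entries hl hD 0 1 (l ^ 2) (by ring) _
      (by rw [mk2_coe]; exact mat2_ext rfl rfl rfl (by ring))
  refine ⟨mk2 _ hdet, hmem, ?_⟩
  rw [conj_iff]
  apply coe_eq
  have hneg : ((-D : GL2) : Matrix (Fin 2) (Fin 2) ℂ) = !![-l, 0; 0, l] := by
    rw [Units.val_neg, hDm hD]
    exact (Matrix.eta_fin_two _).trans (mat2_ext (by simp) (by simp) (by simp) (by simp))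
  rw [Units.val_mul, Units.val_mul, mk2_coe, hDm hD, hneg, Matrix.mul_fin_two,
    Matrix.mul_fin_two]
  exact mat2_ext (by ring) (by ring) (by ring) (by ring)

lemma reach (hl : l ≠ 0) (hD : (D : Matrix (Fin 2) (Fin 2) ℂ) = Matrix.diagonal ![l, -l])
    {B : GL2} (hB : B ∈ conjClass D) :
    ∃ X ∈ conjClass D, ∃ Y ∈ conjClass D,
      X⁻¹ * D * X = B ∨ Y⁻¹ * (X⁻¹ * D * X) * Y = B := by
  by_cases hp : (B : Matrix (Fin 2) (Fin 2) ℂ) 0 0 = -l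
  · obtain ⟨X, hX, hXD⟩ := neg_step hl hD
    have hnegcoe : ((-B : GL2) : Matrix (Fin 2) (Fin 2) ℂ) = -(B : Matrix (Fin 2) (Fin 2) ℂ) :=
      Units.val_neg B
    have hBneg : (-B) ∈ conjClass D := by
      obtain ⟨ht, hdet⟩ := mem_trace_det hD hB
      apply mem_of_trace_det hl hD
      · rw [hnegcoe]
        simp only [Matrix.neg_apply]
        linear_combination -ht
      · rw [hnegcoe, Matrix.det_neg]
        simpa using hdet
    have hp' : ((-B : GL2) : Matrix (Fin 2) (Fin 2) ℂ) 0 0 ≠ -l := by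
      rw [hnegcoe]
      simp only [Matrix.neg_apply, hp]
      intro h0
      exact hl (by linear_combination h0 / 2)
    obtain ⟨Y, hY, hYD⟩ := one_step hl hD hBneg hp'
    refine ⟨X, hX, Y, hY, Or.inr ?_⟩
    rw [hXD, mul_neg, neg_mul, hYD, neg_neg]
  · obtain ⟨X, hX, hXD⟩ := one_step hl hD hB hp
    exact ⟨X, hX, X, hX, Or.inl hXD⟩

end
end Stmt5Aux

open Stmt5Aux in
/-- For nonzero `λ`, the conjugacy class of `diag(λ, -λ)` is a 2-connected quandle under
conjugation: it is not 1-connected, and any two of its elements are linked by at most two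
right multiplications. -/
theorem stmt5 (l : ℂ) (hl : l ≠ 0)
    (D : GL2) (hD : (D : Matrix (Fin 2) (Fin 2) ℂ) = Matrix.diagonal ![l, -l]) :
    (∃ A ∈ conjClass D, ∃ B ∈ conjClass D, ∀ X ∈ conjClass D, X⁻¹ * A * X ≠ B) ∧
      (∀ A ∈ conjClass D, ∀ B ∈ conjClass D, ∃ X ∈ conjClass D, ∃ Y ∈ conjClass D,
        X⁻¹ * A * X = B ∨ Y⁻¹ * (X⁻¹ * A * X) * Y = B) := by
  constructor
  · refine ⟨D, ⟨1, by group⟩, ?_⟩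
    have hdetB : (!![-l, 1; 0, l] : Matrix (Fin 2) (Fin 2) ℂ).det ≠ 0 := by
      rw [Matrix.det_fin_two_of]
      intro h0
      exact hl (pow_eq_zero_iff two_ne_zero |>.mp (by linear_combination -h0))
    refine ⟨mk2 _ hdetB, mem_of_entries hl hD (-l) 1 0 (by ring) _
      (by rw [mk2_coe]; exact mat2_ext rfl rfl rfl (by ring)), ?_⟩
    intro X hX heq
    obtain ⟨ht, hdet⟩ := mem_trace_det hD hX
    rw [conj_iff] at heq
    have hmat : (D : Matrix (Fin 2) (Fin 2) ℂ) * (X : Matrix (Fin 2) (Fin 2) ℂ)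
        = (X : Matrix (Fin 2) (Fin 2) ℂ) * !![-l, 1; 0, l] := by
      have := congrArg (fun Z : GL2 => (Z : Matrix (Fin 2) (Fin 2) ℂ)) heq
      simpa [Units.val_mul, mk2_coe] using this
    obtain ⟨a, b, c, d, hx⟩ : ∃ a b c d, (X : Matrix (Fin 2) (Fin 2) ℂ) = !![a, b; c, d] :=
      ⟨_, _, _, _, Matrix.eta_fin_two _⟩
    rw [hx] at hmat ht hdet
    have ht2 : a + d = 0 := by simpa using ht
    rw [Matrix.det_fin_two_of] at hdet
    rw [hDm hD, Matrix.mul_fin_two, Matrix.mul_fin_two] at hmat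
    have h00 := congrFun (congrFun hmat 0) 0
    have h11 := congrFun (congrFun hmat 1) 1
    simp at h00 h11
    have hA : a = 0 := by
      have h2 : (2 * l) * a = 0 := by linear_combination h00
      exact (mul_eq_zero.mp h2).resolve_left (mul_ne_zero two_ne_zero hl)
    have hdd : d = 0 := by linear_combination ht2 - hA
    have hc : c = 0 := by linear_combination -h11 - 2 * l * hdd
    have : l ^ 2 = 0 := by linear_combination hdet - d * hA + b * hc
    exact hl (pow_eq_zero_iff two_ne_zero |>.mp this)
  · intro A hA B hB
    obtain ⟨P, rfl⟩ := hA
    have hB' : P * B * P⁻¹ ∈ conjClass D := by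
      obtain ⟨Q, rfl⟩ := hB
      exact ⟨Q * P⁻¹, by group⟩
    obtain ⟨X, hX, Y, hY, hcase⟩ := reach hl hD hB'
    obtain ⟨R, hR⟩ := hX
    obtain ⟨S, hS⟩ := hY
    refine ⟨P⁻¹ * X * P, ⟨R * P, by rw [hR]; group⟩, P⁻¹ * Y * P, ⟨S * P, by rw [hS]; group⟩, ?_⟩
    rcases hcase with h | h
    · left
      have h2 : P⁻¹ * (X⁻¹ * D * X) * P = B := by rw [h]; group
      rw [← h2]; group
    · right
      have h2 : P⁻¹ * (Y⁻¹ * (X⁻¹ * D * X) * Y) * P = B := by rw [h]; group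
      rw [← h2]; group
end

section
/- Let λ ∈ ℂ be nonzero. Then the conjugacy class M_λ of the Jordan block [[λ, 1], [0, λ]] in GL(2, ℂ), viewed as a quandle under conjugation, is 2-connected: (a) it is not 1-connected, i.e., there exist A, B ∈ M_λ such that B ≠ X⁻¹ A X for every X ∈ M_λ; and (b) for all A, B ∈ M_λ there exist X, Y ∈ M_λ with either B = X⁻¹ A X or B = Y⁻¹ X⁻¹ A X Y. -/
open Matrix

abbrev M2 := Matrix (Fin 2) (Fin 2) ℂ

lemma fin2_ext {A B : M2} (h00 : A 0 0 = B 0 0) (h01 : A 0 1 = B 0 1)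
    (h10 : A 1 0 = B 1 0) (h11 : A 1 1 = B 1 1) : A = B := by
  rw [Matrix.eta_fin_two A, Matrix.eta_fin_two B, h00, h01, h10, h11]

lemma conj_eq_of_mul_eq {A B X : GL2} (h : (A : M2) * (X : M2) = (X : M2) * (B : M2)) :
    X⁻¹ * A * X = B := by
  have h' : A * X = X * B := Units.ext h
  calc X⁻¹ * A * X = X⁻¹ * (A * X) := by group
  _ = X⁻¹ * (X * B) := by rw [h']
  _ = B := by group

lemma mul_eq_of_conj_eq {A B X : GL2} (h : X⁻¹ * A * X = B) :
    (A : M2) * (X : M2) = (X : M2) * (B : M2) := by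
  have h' : A * X = X * B := by rw [← h]; group
  exact congrArg Units.val h'

/-- Any matrix of the form `λI + N` with `N` nilpotent nonzero lies in the conjugacy
class of the Jordan block `J`. -/
lemma mem_nilp (l : ℂ) (hl : l ≠ 0) (J : GL2) (hJ : (J : M2) = !![l, 1; 0, l])
    (p q r s : ℂ) (h00 : p*p + q*r = 0) (h01 : p*q + q*s = 0)
    (h10 : r*p + s*r = 0) (h11 : r*q + s*s = 0)
    (hne : ¬(p = 0 ∧ q = 0 ∧ r = 0 ∧ s = 0)) :
    ∃ X : GL2, (X : M2) = !![l + p, q; r, l + s] ∧ X ∈ conjClass J := by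
  by_cases hr : r = 0
  · have hp : p = 0 := by
      have : p * p = 0 := by rw [hr] at h00; linear_combination h00
      exact mul_self_eq_zero.mp this
    have hs : s = 0 := by
      have : s * s = 0 := by rw [hr] at h11; linear_combination h11
      exact mul_self_eq_zero.mp this
    have hq : q ≠ 0 := by
      intro hq; exact hne ⟨hp, hq, hr, hs⟩
    have hdT : (!![l + p, q; r, l + s] : M2).det ≠ 0 := by
      rw [hp, hs, hr, Matrix.det_fin_two_of]
      simpa using pow_ne_zero 2 hl
    refine ⟨Matrix.GeneralLinearGroup.mkOfDetNeZero _ hdT, rfl, ?_⟩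
    have hdP : (!![(1:ℂ), 0; 0, q] : M2).det ≠ 0 := by
      rw [Matrix.det_fin_two_of]; simpa using hq
    set P : GL2 := Matrix.GeneralLinearGroup.mkOfDetNeZero _ hdP with hP
    refine ⟨P, ?_⟩
    set X : GL2 := Matrix.GeneralLinearGroup.mkOfDetNeZero _ hdT with hX
    have key : P * X = J * P := by
      apply Units.ext
      show (!![(1:ℂ), 0; 0, q] : M2) * !![l + p, q; r, l + s] = (J : M2) * !![(1:ℂ), 0; 0, q]
      rw [hJ, hp, hs, hr, Matrix.mul_fin_two, Matrix.mul_fin_two]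
      apply fin2_ext <;> simp <;> ring
    calc X = P⁻¹ * (P * X) := by group
    _ = P⁻¹ * (J * P) := by rw [key]
    _ = P⁻¹ * J * P := by group
  · have hsp : s = -p := by
      have h : r * (p + s) = 0 := by linear_combination h10
      rcases mul_eq_zero.mp h with h | h
      · exact absurd h hr
      · linear_combination h
    have hdT : (!![l + p, q; r, l + s] : M2).det ≠ 0 := by
      rw [Matrix.det_fin_two_of]
      have : (l + p) * (l + s) - q * r = l * l := by rw [hsp]; linear_combination -h00
      rw [this]; exact mul_ne_zero hl hl
    refine ⟨Matrix.GeneralLinearGroup.mkOfDetNeZero _ hdT, rfl, ?_⟩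
    have hdP : (!![(0:ℂ), 1; r, s] : M2).det ≠ 0 := by
      rw [Matrix.det_fin_two_of]; simpa using hr
    set P : GL2 := Matrix.GeneralLinearGroup.mkOfDetNeZero _ hdP with hP
    refine ⟨P, ?_⟩
    set X : GL2 := Matrix.GeneralLinearGroup.mkOfDetNeZero _ hdT with hX
    have key : P * X = J * P := by
      apply Units.ext
      show (!![(0:ℂ), 1; r, s] : M2) * !![l + p, q; r, l + s] = (J : M2) * !![(0:ℂ), 1; r, s]
      rw [hJ, Matrix.mul_fin_two, Matrix.mul_fin_two]
      apply fin2_ext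
      · simp
      · simp
      · simp; linear_combination h10
      · simp; linear_combination h11
    calc X = P⁻¹ * (P * X) := by group
    _ = P⁻¹ * (J * P) := by rw [key]
    _ = P⁻¹ * J * P := by group

/-- Every member of the conjugacy class of `J` has the form `λI + N` with `N`
nilpotent and nonzero. -/
lemma entries_of_mem (l : ℂ) (J : GL2) (hJ : (J : M2) = !![l, 1; 0, l]) {X : GL2}
    (hX : X ∈ conjClass J) : ∃ a b c d : ℂ,
    (X : M2) = !![l + a, b; c, l + d] ∧ a*a + b*c = 0 ∧ a*b + b*d = 0 ∧
    c*a + d*c = 0 ∧ c*b + d*d = 0 ∧ ¬(a = 0 ∧ b = 0 ∧ c = 0 ∧ d = 0) := by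
  obtain ⟨Q, hQ⟩ := hX
  have hu : Q * X = J * Q := by rw [hQ]; group
  have hQX : (Q : M2) * (X : M2) = (J : M2) * (Q : M2) := congrArg Units.val hu
  set S : M2 := !![l, 0; 0, l] with hS
  set M : M2 := !![0, 1; 0, 0] with hM
  set N : M2 := (X : M2) - S with hN
  have hcomm : ∀ A : M2, A * S = S * A := by
    intro A
    rw [Matrix.eta_fin_two A, hS, Matrix.mul_fin_two, Matrix.mul_fin_two]
    apply fin2_ext <;> simp <;> ring
  have hJS : (J : M2) - S = M := by
    rw [hJ, hS, hM]; apply fin2_ext <;> simp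
  have key : (Q : M2) * N = M * (Q : M2) := by
    rw [hN, Matrix.mul_sub, hQX, hcomm, ← Matrix.sub_mul, hJS]
  have hMM : M * M = 0 := by
    rw [hM, Matrix.mul_fin_two]
    apply fin2_ext <;> simp
  have hQQ : ((Q⁻¹ : GL2) : M2) * ((Q : GL2) : M2) = 1 := Q.inv_mul
  have hQQ' : ((Q : GL2) : M2) * ((Q⁻¹ : GL2) : M2) = 1 := Q.mul_inv
  have hQN2 : (Q : M2) * (N * N) = 0 := by
    rw [← Matrix.mul_assoc, key, Matrix.mul_assoc, key, ← Matrix.mul_assoc, hMM,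
      Matrix.zero_mul]
  have hN2 : N * N = 0 := by
    have h2 : ((Q⁻¹ : GL2) : M2) * ((Q : M2) * (N * N)) = N * N := by
      rw [← Matrix.mul_assoc, hQQ, Matrix.one_mul]
    rw [← h2, hQN2, Matrix.mul_zero]
  have hN0 : N ≠ 0 := by
    intro h
    have : M * (Q : M2) = 0 := by rw [← key, h, Matrix.mul_zero]
    have hM0 : M = 0 := by
      have h2 : (M * (Q : M2)) * ((Q⁻¹ : GL2) : M2) = M := by
        rw [Matrix.mul_assoc, hQQ', Matrix.mul_one]
      rw [← h2, this, Matrix.zero_mul]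
    have : (1 : ℂ) = 0 := by
      have := congrFun (congrFun hM0 0) 1
      simpa [hM] using this
    exact one_ne_zero this
  refine ⟨N 0 0, N 0 1, N 1 0, N 1 1, ?_, ?_, ?_, ?_, ?_, ?_⟩
  · apply fin2_ext <;> simp [hN, hS] <;> ring
  · have := congrFun (congrFun hN2 0) 0
    simpa [Matrix.mul_apply, Fin.sum_univ_two] using this
  · have := congrFun (congrFun hN2 0) 1
    simpa [Matrix.mul_apply, Fin.sum_univ_two] using this
  · have := congrFun (congrFun hN2 1) 0
    simpa [Matrix.mul_apply, Fin.sum_univ_two, mul_comm] using this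
  · have := congrFun (congrFun hN2 1) 1
    simpa [Matrix.mul_apply, Fin.sum_univ_two, mul_comm] using this
  · rintro ⟨h1, h2, h3, h4⟩
    apply hN0
    apply fin2_ext <;> simp [h1, h2, h3, h4]

/-- Every element of the class is reachable from `J` in at most two steps. -/
lemma from_J (l : ℂ) (hl : l ≠ 0) (J : GL2) (hJ : (J : M2) = !![l, 1; 0, l]) :
    ∀ B ∈ conjClass J, ∃ X ∈ conjClass J, ∃ Y ∈ conjClass J,
      X⁻¹ * J * X = B ∨ Y⁻¹ * (X⁻¹ * J * X) * Y = B := by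
  intro B hB
  have hJmem : J ∈ conjClass J := ⟨1, by group⟩
  obtain ⟨p, q, r, s, hBmat, h00, h01, h10, h11, hne⟩ := entries_of_mem l J hJ hB
  by_cases hr : r = 0
  · -- here `p = s = 0`, `q ≠ 0`: two steps, through `C = λI + E₂₁`
    have hp : p = 0 := mul_self_eq_zero.mp (by rw [hr] at h00; linear_combination h00)
    have hs : s = 0 := mul_self_eq_zero.mp (by rw [hr] at h11; linear_combination h11)
    have hq : q ≠ 0 := fun h => hne ⟨hp, h, hr, hs⟩
    obtain ⟨w, hw⟩ := IsAlgClosed.exists_pow_nat_eq (-(1/q)) (n := 2) two_pos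
    have hw2 : q * (w * w) = -1 := by
      have : w * w = -(1/q) := by rw [← hw]; ring
      rw [this]; field_simp
    obtain ⟨X, hXmat, hXmem⟩ := mem_nilp l hl J hJ l (l*Complex.I) (l*Complex.I) (-l)
      (by have := Complex.I_sq; linear_combination (l*l) * this)
      (by ring) (by ring)
      (by have := Complex.I_sq; linear_combination (l*l) * this)
      (fun h => hl h.1)
    obtain ⟨C, hCmat, hCmem⟩ := mem_nilp l hl J hJ 0 0 1 0
      (by ring) (by ring) (by ring) (by ring) (by simp)
    obtain ⟨Y, hYmat, hYmem⟩ := mem_nilp l hl J hJ (-l) (q*(l*w)) (l*w) l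
      (by linear_combination (l*l) * hw2)
      (by ring) (by ring)
      (by linear_combination (l*l) * hw2)
      (fun h => hl h.2.2.2)
    refine ⟨X, hXmem, Y, hYmem, Or.inr ?_⟩
    have h1 : X⁻¹ * J * X = C := by
      apply conj_eq_of_mul_eq
      rw [hJ, hXmat, hCmat, Matrix.mul_fin_two, Matrix.mul_fin_two]
      apply fin2_ext <;> simp <;> ring
    have h2 : Y⁻¹ * C * Y = B := by
      apply conj_eq_of_mul_eq
      rw [hCmat, hYmat, hBmat, hp, hs, hr, Matrix.mul_fin_two, Matrix.mul_fin_two]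
      apply fin2_ext <;> simp <;> ring
    rw [h1]; exact h2
  · -- here `r ≠ 0`: one step suffices
    have hsp : s = -p := by
      have h : r * (p + s) = 0 := by linear_combination h10
      rcases mul_eq_zero.mp h with h | h
      · exact absurd h hr
      · linear_combination h
    obtain ⟨v, hv⟩ := IsAlgClosed.exists_pow_nat_eq (-r) (n := 2) two_pos
    have hrv : r = -(v*v) := by linear_combination hv
    have hv0 : v ≠ 0 := by
      intro h; rw [h] at hrv; apply hr; rw [hrv]; ring
    have hqv : q = p*p/(v*v) := by
      rw [hrv] at h00
      field_simp
      linear_combination -h00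
    obtain ⟨X, hXmat, hXmem⟩ := mem_nilp l hl J hJ
      (l - l*p/v) (-((l - l*p/v)*(l - l*p/v))/(l*v)) (l*v) (-(l - l*p/v))
      (by field_simp; ring) (by field_simp; ring) (by ring)
      (by field_simp; ring)
      (fun h => (mul_ne_zero hl hv0) h.2.2.1)
    refine ⟨X, hXmem, J, hJmem, Or.inl ?_⟩
    apply conj_eq_of_mul_eq
    rw [hJ, hXmat, hBmat, hsp, hqv, hrv, Matrix.mul_fin_two, Matrix.mul_fin_two]
    apply fin2_ext <;> simp <;> field_simp <;> ring

/-- For nonzero `λ`, the conjugacy class of the Jordan block `[[λ, 1], [0, λ]]` is a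
2-connected quandle under conjugation: it is not 1-connected, and any two of its elements
are linked by at most two right multiplications. -/
theorem stmt6 (l : ℂ) (hl : l ≠ 0)
    (J : GL2) (hJ : (J : Matrix (Fin 2) (Fin 2) ℂ) = !![l, 1; 0, l]) :
    (∃ A ∈ conjClass J, ∃ B ∈ conjClass J, ∀ X ∈ conjClass J, X⁻¹ * A * X ≠ B) ∧
      (∀ A ∈ conjClass J, ∀ B ∈ conjClass J, ∃ X ∈ conjClass J, ∃ Y ∈ conjClass J,
        X⁻¹ * A * X = B ∨ Y⁻¹ * (X⁻¹ * A * X) * Y = B) := by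
  have hJmem : J ∈ conjClass J := ⟨1, by group⟩
  constructor
  · -- part (a): not 1-connected
    obtain ⟨B, hBmat, hBmem⟩ := mem_nilp l hl J hJ 0 2 0 0
      (by ring) (by ring) (by ring) (by ring) (by norm_num)
    refine ⟨J, hJmem, B, hBmem, ?_⟩
    intro X hX heq
    obtain ⟨a, b, c, d, hXmat, h00, h01, h10, h11, hne⟩ := entries_of_mem l J hJ hX
    have hm : (J : M2) * (X : M2) = (X : M2) * (B : M2) := mul_eq_of_conj_eq heq
    rw [hJ, hXmat, hBmat, Matrix.mul_fin_two, Matrix.mul_fin_two] at hm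
    have e00 := congrFun (congrFun hm 0) 0
    have e01 := congrFun (congrFun hm 0) 1
    simp at e00 e01
    have hc : c = 0 := by linear_combination e00
    have hd : d = l + 2*a := by linear_combination e01
    have ha : a = 0 := mul_self_eq_zero.mp (by rw [hc] at h00; linear_combination h00)
    have hd0 : d = 0 := mul_self_eq_zero.mp (by rw [hc] at h11; linear_combination h11)
    apply hl
    rw [ha] at hd
    rw [hd0] at hd
    linear_combination -hd
  · -- part (b): two steps always suffice
    intro A hA B hB
    obtain ⟨P, hP⟩ := hA
    obtain ⟨Q, hQ⟩ := hB
    have hB' : P * B * P⁻¹ ∈ conjClass J := by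
      refine ⟨Q * P⁻¹, ?_⟩
      rw [hQ]; group
    obtain ⟨X₀, hX₀, Y₀, hY₀, hor⟩ := from_J l hl J hJ (P * B * P⁻¹) hB'
    obtain ⟨R, hR⟩ := hX₀
    obtain ⟨T, hT⟩ := hY₀
    refine ⟨P⁻¹ * X₀ * P, ⟨R * P, by rw [hR]; group⟩, P⁻¹ * Y₀ * P, ⟨T * P, by rw [hT]; group⟩, ?_⟩
    rcases hor with h | h
    · left
      rw [hP]
      calc (P⁻¹ * X₀ * P)⁻¹ * (P⁻¹ * J * P) * (P⁻¹ * X₀ * P)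
          = P⁻¹ * (X₀⁻¹ * J * X₀) * P := by group
      _ = P⁻¹ * (P * B * P⁻¹) * P := by rw [h]
      _ = B := by group
    · right
      rw [hP]
      calc (P⁻¹ * Y₀ * P)⁻¹ * ((P⁻¹ * X₀ * P)⁻¹ * (P⁻¹ * J * P) * (P⁻¹ * X₀ * P)) * (P⁻¹ * Y₀ * P)
          = P⁻¹ * (Y₀⁻¹ * (X₀⁻¹ * J * X₀) * Y₀) * P := by group
      _ = P⁻¹ * (P * B * P⁻¹) * P := by rw [h]
      _ = B := by group
end

section
/- Let λ ∈ ℂ be nonzero. For every positive integer k there exist matrices X, P in the conjugacy class M_λ of the Jordan block [[λ, 1], [0, λ]] in GL(2, ℂ) such that P⁻ᵏ X Pᵏ ≠ X. In particular, the conjugation quandle M_λ has infinite type. -/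
open Matrix

lemma jordan_pow (l : ℂ) : ∀ k : ℕ,
    (!![l, 1; 0, l]) ^ k = !![l ^ k, (k : ℂ) * l ^ (k - 1); 0, l ^ k] := by
  intro k
  induction k with
  | zero => simp [Matrix.one_fin_two]
  | succ n ih =>
      rw [pow_succ, ih]
      have h : (n : ℂ) * l ^ (n - 1) * l = (n : ℂ) * l ^ n := by
        cases n with
        | zero => simp
        | succ m => rw [Nat.succ_sub_one, mul_assoc, ← pow_succ]
      rw [Matrix.mul_fin_two]
      ext i j
      fin_cases i <;> fin_cases j
      · simpa using (pow_succ l n).symm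
      · simp
        linear_combination h
      · simp
      · simpa using (pow_succ l n).symm

/-- For nonzero `λ` and every positive integer `k`, there are `X, P` in the conjugacy class
of the Jordan block `[[λ, 1], [0, λ]]` with `P⁻ᵏ X Pᵏ ≠ X`; in particular this conjugation
quandle has infinite type. -/
theorem stmt9 (l : ℂ) (hl : l ≠ 0)
    (J : GL2) (hJ : (J : Matrix (Fin 2) (Fin 2) ℂ) = !![l, 1; 0, l]) :
    ∀ k : ℕ, 1 ≤ k → ∃ X ∈ conjClass J, ∃ P ∈ conjClass J, (P ^ k)⁻¹ * X * P ^ k ≠ X := by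
  intro k hk
  have hS : (!![(0:ℂ), 1; 1, 0]) * (!![(0:ℂ), 1; 1, 0]) = 1 := by
    simp [Matrix.mul_fin_two, Matrix.one_fin_two]
  set S : GL2 := ⟨!![(0:ℂ), 1; 1, 0], !![(0:ℂ), 1; 1, 0], hS, hS⟩ with hSdef
  refine ⟨S⁻¹ * J * S, ⟨S, rfl⟩, J, ⟨1, by simp⟩, ?_⟩
  intro h
  have h2 : (S⁻¹ * J * S) * J ^ k = J ^ k * (S⁻¹ * J * S) := by
    conv_rhs => rw [← h]
    group
  have h3 := congrArg Units.val h2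
  have hSinv : ((S⁻¹ : GL2) : Matrix (Fin 2) (Fin 2) ℂ) = !![(0:ℂ), 1; 1, 0] := rfl
  have hSv : ((S : GL2) : Matrix (Fin 2) (Fin 2) ℂ) = !![(0:ℂ), 1; 1, 0] := rfl
  have hP : ((J ^ k : GL2) : Matrix (Fin 2) (Fin 2) ℂ)
      = !![l ^ k, (k : ℂ) * l ^ (k - 1); 0, l ^ k] := by
    rw [Units.val_pow_eq_pow_val, hJ, jordan_pow]
  simp only [Units.val_mul] at h3
  rw [hSinv, hJ, hP, hSv] at h3
  have h4 := congrFun (congrFun h3 0) 0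
  simp [Matrix.mul_fin_two] at h4
  have h5 : (k : ℂ) * l ^ (k - 1) = 0 := by linear_combination -h4
  have : (k : ℂ) ≠ 0 := Nat.cast_ne_zero.mpr (by omega)
  exact (mul_ne_zero this (pow_ne_zero _ hl)) h5
end

section
/- Let λ₁, λ₂ ∈ ℂ be nonzero and let n be a positive integer. Then the conjugacy class M_{λ₁,λ₂} of diag(λ₁, λ₂) in GL(2, ℂ) satisfies X⁻ⁿ A Xⁿ = A for all A, X ∈ M_{λ₁,λ₂} (i.e., M_{λ₁,λ₂} is an n-quandle under conjugation) if and only if (λ₁/λ₂)ⁿ = 1. -/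
open Matrix

/-- For nonzero `λ₁, λ₂` and a positive integer `n`, the conjugacy class of `diag(λ₁, λ₂)`
is an `n`-quandle under conjugation (i.e. `X⁻ⁿ A Xⁿ = A` for all its elements `A, X`)
if and only if `(λ₁/λ₂)ⁿ = 1`. -/
theorem stmt10 (l1 l2 : ℂ) (h1 : l1 ≠ 0) (h2 : l2 ≠ 0) (n : ℕ) (hn : 1 ≤ n)
    (D : GL2) (hD : (D : Matrix (Fin 2) (Fin 2) ℂ) = Matrix.diagonal ![l1, l2]) :
    (∀ A ∈ conjClass D, ∀ X ∈ conjClass D, (X ^ n)⁻¹ * A * X ^ n = A) ↔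
      (l1 / l2) ^ n = 1 := by
  have hpow : ∀ (P : GL2), ((P⁻¹ * D * P) ^ n : GL2) = P⁻¹ * D ^ n * P := by
    intro P
    have := conj_pow (i := n) (a := P⁻¹) (b := D)
    simpa using this
  constructor
  · intro h
    by_cases hl : l1 = l2
    · subst hl; simp [div_self h1]
    have hdet : (!![(1:ℂ),1;0,1]).det ≠ 0 := by
      simp [Matrix.det_fin_two_of]
    set P : GL2 := Matrix.GeneralLinearGroup.mkOfDetNeZero _ hdet with hP
    have hPval : (P : Matrix (Fin 2) (Fin 2) ℂ) = !![(1:ℂ),1;0,1] := rfl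
    have hPinv : ((P⁻¹ : GL2) : Matrix (Fin 2) (Fin 2) ℂ) = !![(1:ℂ),-1;0,1] := by
      rw [Matrix.coe_units_inv, hPval]
      refine Matrix.inv_eq_right_inv ?_
      norm_num [Matrix.mul_fin_two]
      exact Matrix.one_fin_two.symm
    have hDmem : D ∈ conjClass D := ⟨1, by group⟩
    have hXmem : (P⁻¹ * D * P) ∈ conjClass D := ⟨P, rfl⟩
    have key := h D hDmem _ hXmem
    rw [hpow] at key
    have comm : (P * D * P⁻¹) * D ^ n = D ^ n * (P * D * P⁻¹) := by
      have heq : D * (P⁻¹ * D ^ n * P) = (P⁻¹ * D ^ n * P) * D := by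
        calc D * (P⁻¹ * D ^ n * P)
            = (P⁻¹ * D ^ n * P) * ((P⁻¹ * D ^ n * P)⁻¹ * D * (P⁻¹ * D ^ n * P)) := by group
          _ = (P⁻¹ * D ^ n * P) * D := by rw [key]
      calc (P * D * P⁻¹) * D ^ n
          = P * (D * (P⁻¹ * D ^ n * P)) * P⁻¹ := by group
        _ = P * ((P⁻¹ * D ^ n * P) * D) * P⁻¹ := by rw [heq]
        _ = D ^ n * (P * D * P⁻¹) := by group
    have mcomm : (!![(1:ℂ),1;0,1] * Matrix.diagonal ![l1,l2] * !![(1:ℂ),-1;0,1]) * Matrix.diagonal (![l1,l2] ^ n)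
        = Matrix.diagonal (![l1,l2] ^ n) * (!![(1:ℂ),1;0,1] * Matrix.diagonal ![l1,l2] * !![(1:ℂ),-1;0,1]) := by
      have := congrArg (Units.val) comm
      simpa [Units.val_mul, Units.val_pow_eq_pow_val, hD, hPval, hPinv, Matrix.diagonal_pow] using this
    have hdiag : Matrix.diagonal ![l1,l2] = !![l1, 0; 0, l2] := by
      ext i j
      fin_cases i <;> fin_cases j <;> simp [Matrix.diagonal_apply]
    have hM : (!![(1:ℂ),1;0,1] * Matrix.diagonal ![l1,l2] * !![(1:ℂ),-1;0,1]) = !![l1, l2 - l1; 0, l2] := by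
      rw [hdiag, Matrix.mul_fin_two, Matrix.mul_fin_two]
      norm_num
      ring
    rw [hM] at mcomm
    have e01 := congrFun (congrFun mcomm 0) 1
    simp [Matrix.mul_diagonal, Matrix.diagonal_mul, Pi.pow_apply] at e01
    have hln : l1 ^ n = l2 ^ n := by
      have hsub : l2 - l1 ≠ 0 := sub_ne_zero.mpr (Ne.symm hl)
      exact mul_left_cancel₀ hsub
        (show (l2 - l1) * l1 ^ n = (l2 - l1) * l2 ^ n by linear_combination -e01)
    rw [div_pow, hln, div_self (pow_ne_zero n h2)]
  · intro h A hA X hX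
    obtain ⟨Q, rfl⟩ := hX
    have hln : l1 ^ n = l2 ^ n := by
      field_simp [div_pow] at h
      have e : l2 ^ n * l2⁻¹ ^ n = 1 := by rw [← mul_pow, mul_inv_cancel₀ h2, one_pow]
      linear_combination l2 ^ n * h - l1 ^ n * e
    have hDn : ((D ^ n : GL2) : Matrix (Fin 2) (Fin 2) ℂ) = (l1 ^ n) • (1 : Matrix (Fin 2) (Fin 2) ℂ) := by
      rw [Units.val_pow_eq_pow_val, hD, Matrix.diagonal_pow]
      ext i j
      fin_cases i <;> fin_cases j <;> simp [Matrix.diagonal, hln]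
    have hXn : ((Q⁻¹ * D * Q) ^ n : GL2) = D ^ n := by
      rw [hpow]
      ext1
      simp only [Units.val_mul, hDn]
      rw [Matrix.mul_smul, Matrix.mul_one, Matrix.smul_mul]
      rw [← Units.val_mul, inv_mul_cancel]
      simp
    rw [hXn]
    have hcomm : A * D ^ n = D ^ n * A := by
      ext1
      simp only [Units.val_mul, hDn]
      rw [Matrix.mul_smul, Matrix.mul_one, Matrix.smul_mul, Matrix.one_mul]
    rw [mul_assoc, hcomm, ← mul_assoc, inv_mul_cancel, one_mul]
end

section
/- For every integer n ≥ 2, the conjugation quandle Conj(GL(2, ℂ)) is not isomorphic to the n-conjugation quandle Conjₙ(GL(2, ℂ)); that is, there is no bijection f : GL(2, ℂ) → GL(2, ℂ) such that f(B⁻¹ A B) = f(B)⁻ⁿ f(A) f(B)ⁿ for all A, B ∈ GL(2, ℂ). -/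
open Matrix

lemma diagPow (z : ℂ) (k : ℕ) : (!![(1:ℂ),0;0,z])^k = !![1,0;0,z^k] := by
  induction k with
  | zero => simp [Matrix.one_fin_two]
  | succ k ih => rw [pow_succ, ih, pow_succ]; simp [Matrix.mul_fin_two]

lemma upPow (c : ℂ) (k : ℕ) : (!![(1:ℂ),c;0,1])^k = !![1,(k:ℂ)*c;0,1] := by
  induction k with
  | zero => simp [Matrix.one_fin_two]
  | succ k ih =>
    rw [pow_succ, ih]
    simp [Matrix.mul_fin_two]
    ring

/-- For `n ≥ 2`, the conjugation quandle `Conj(GL(2, ℂ))` is not isomorphic to the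
`n`-conjugation quandle `Conjₙ(GL(2, ℂ))`: there is no bijection `f` of `GL(2, ℂ)` with
`f(B⁻¹ A B) = f(B)⁻ⁿ f(A) f(B)ⁿ` for all `A, B`. -/
theorem stmt11 (n : ℕ) (hn : 2 ≤ n) :
    ¬∃ f : GL2 → GL2, Function.Bijective f ∧
      ∀ A B : GL2, f (B⁻¹ * A * B) = (f B ^ n)⁻¹ * f A * f B ^ n := by
  rintro ⟨f, ⟨hinj, hsurj⟩, hf⟩
  have hn0 : n ≠ 0 := by omega
  obtain ⟨ζ, hprim⟩ : ∃ ζ : ℂ, IsPrimitiveRoot ζ n := ⟨_, Complex.isPrimitiveRoot_exp n hn0⟩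
  have hζ1 : ζ ^ n = 1 := hprim.pow_eq_one
  have hζne : ζ ≠ 1 := hprim.ne_one (by omega)
  -- the unit C = diag(1, ζ)
  have hCinv : !![(1:ℂ),0;0,ζ] * !![(1:ℂ),0;0,ζ^(n-1)] = 1 := by
    simp [Matrix.mul_fin_two, Matrix.one_fin_two, ← pow_succ', Nat.sub_add_cancel (by omega : 1 ≤ n), hζ1]
  have hCinv' : !![(1:ℂ),0;0,ζ^(n-1)] * !![(1:ℂ),0;0,ζ] = 1 := by
    simp [Matrix.mul_fin_two, Matrix.one_fin_two, ← pow_succ, Nat.sub_add_cancel (by omega : 1 ≤ n), hζ1]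
  set C : GL2 := ⟨!![(1:ℂ),0;0,ζ], !![(1:ℂ),0;0,ζ^(n-1)], hCinv, hCinv'⟩ with hC
  -- C^n = 1
  have hCn : C ^ n = 1 := by
    ext
    simp only [Units.val_pow_eq_pow_val, Units.val_one, hC]
    rw [diagPow, hζ1]
    simp [Matrix.one_fin_two]
  -- the unit R, an n-th root of the unipotent !![1,1;0,1]
  set c : ℂ := (n : ℂ)⁻¹ with hc
  have hRinv : !![(1:ℂ),c;0,1] * !![(1:ℂ),-c;0,1] = 1 := by
    simp [Matrix.mul_fin_two, Matrix.one_fin_two]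
  have hRinv' : !![(1:ℂ),-c;0,1] * !![(1:ℂ),c;0,1] = 1 := by
    simp [Matrix.mul_fin_two, Matrix.one_fin_two]
  set R : GL2 := ⟨!![(1:ℂ),c;0,1], !![(1:ℂ),-c;0,1], hRinv, hRinv'⟩ with hR
  have hRn : ((R ^ n : GL2) : Matrix (Fin 2) (Fin 2) ℂ) = !![(1:ℂ),1;0,1] := by
    simp only [Units.val_pow_eq_pow_val, hR]
    rw [upPow]
    congr 1
    rw [hc, mul_inv_cancel₀ (by exact_mod_cast hn0 : (n:ℂ) ≠ 0)]
  -- B with f B = C is central, since C^n = 1 and f is injective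
  obtain ⟨B, hB⟩ := hsurj C
  have hBcen : ∀ A : GL2, B⁻¹ * A * B = A := by
    intro A
    apply hinj
    rw [hf A B, hB, hCn]
    simp
  obtain ⟨D, hD⟩ := hsurj R
  have key := hf B D
  rw [show D⁻¹ * B * D = B by
      have := hBcen D
      have h2 : D * B = B * D := by
        calc D * B = B * (B⁻¹ * D * B) := by group
        _ = B * D := by rw [this]
      calc D⁻¹ * B * D = D⁻¹ * (B * D) := by group
      _ = D⁻¹ * (D * B) := by rw [h2]
      _ = B := by group] at key
  rw [hB, hD] at key
  -- key : C = (R^n)⁻¹ * C * R^n, hence R^n commutes with C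
  have hcomm : (R ^ n) * C = C * (R ^ n) := by
    calc (R ^ n) * C = (R ^ n) * ((R ^ n)⁻¹ * C * R ^ n) := by rw [← key]
    _ = C * R ^ n := by group
  -- compare the (0,1) entries: ζ = 1, contradiction
  have := congrArg (fun M : GL2 => (M : Matrix (Fin 2) (Fin 2) ℂ) 0 1) hcomm
  simp only [Units.val_mul, hRn, hC] at this
  rw [Matrix.mul_fin_two, Matrix.mul_fin_two] at this
  simp at this
  exact hζne this
end

section
/- Let m, n be positive integers with m ≠ n, and let PGL(2, ℂ) = GL(2, ℂ)/Z(GL(2, ℂ)). Then Conjₘ(PGL(2, ℂ)) is not isomorphic to Conjₙ(PGL(2, ℂ)); that is, there is no bijection f : PGL(2, ℂ) → PGL(2, ℂ) with f(b⁻ᵐ a bᵐ) = f(b)⁻ⁿ f(a) f(b)ⁿ for all a, b ∈ PGL(2, ℂ). -/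
open Matrix

/-- `PGL(2, ℂ)`, the quotient of `GL(2, ℂ)` by its center. -/
abbrev PGL2 : Type := GL2 ⧸ Subgroup.center GL2

noncomputable section Aux13

open Polynomial Complex

abbrev Mat2 : Type := Matrix (Fin 2) (Fin 2) ℂ

lemma mat2_ext_iff {A B : Mat2} :
    A = B ↔ A 0 0 = B 0 0 ∧ A 0 1 = B 0 1 ∧ A 1 0 = B 1 0 ∧ A 1 1 = B 1 1 := by
  constructor
  · rintro rfl; exact ⟨rfl, rfl, rfl, rfl⟩
  · rintro ⟨h1, h2, h3, h4⟩
    ext i j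
    fin_cases i <;> fin_cases j <;> assumption

lemma mat2_lit {a b c d a' b' c' d' : ℂ} :
    (!![a, b; c, d] : Mat2) = !![a', b'; c', d'] ↔ a = a' ∧ b = b' ∧ c = c' ∧ d = d' := by
  rw [mat2_ext_iff]; simp

lemma smul_mat2 {c a b d e : ℂ} :
    c • (!![a, b; d, e] : Mat2) = !![c * a, c * b; c * d, c * e] := by
  rw [mat2_ext_iff]
  simp [Matrix.smul_apply]

lemma det_ne_zero' (X : GL2) : ((X : Mat2)).det ≠ 0 := by
  have h : IsUnit (X : Mat2) := ⟨X, rfl⟩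
  exact ((Matrix.isUnit_iff_isUnit_det _).mp h).ne_zero

/-- shear matrix as a unit -/
def ShU (s : ℂ) : GL2 :=
  ⟨!![1, s; 0, 1], !![1, -s; 0, 1],
    by rw [Matrix.mul_fin_two, Matrix.one_fin_two, mat2_lit]; norm_num,
    by rw [Matrix.mul_fin_two, Matrix.one_fin_two, mat2_lit]; norm_num⟩

/-- the standard unipotent element -/
def uU : GL2 := ShU 1

@[simp] lemma uU_coe : ((uU : GL2) : Mat2) = !![1, 1; 0, 1] := rfl
@[simp] lemma ShU_coe (s : ℂ) : ((ShU s : GL2) : Mat2) = !![1, s; 0, 1] := rfl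
@[simp] lemma ShU_inv_coe (s : ℂ) : (((ShU s)⁻¹ : GL2) : Mat2) = !![1, -s; 0, 1] := rfl

/-- lower shear -/
def uL : GL2 :=
  ⟨!![1, 0; 1, 1], !![1, 0; -1, 1],
    by rw [Matrix.mul_fin_two, Matrix.one_fin_two, mat2_lit]; norm_num,
    by rw [Matrix.mul_fin_two, Matrix.one_fin_two, mat2_lit]; norm_num⟩

@[simp] lemma uL_coe : ((uL : GL2) : Mat2) = !![1, 0; 1, 1] := rfl

/-- diagonal matrix `diag(a, 1)` as a unit -/
def uD (a : ℂˣ) : GL2 :=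
  ⟨!![(a : ℂ), 0; 0, 1], !![((a⁻¹ : ℂˣ) : ℂ), 0; 0, 1],
    by rw [Matrix.mul_fin_two, Matrix.one_fin_two, mat2_lit]; simp,
    by rw [Matrix.mul_fin_two, Matrix.one_fin_two, mat2_lit]; simp⟩

@[simp] lemma uD_coe (a : ℂˣ) : ((uD a : GL2) : Mat2) = !![(a : ℂ), 0; 0, 1] := rfl

lemma uD_mul (a b : ℂˣ) : uD a * uD b = uD (a * b) := by
  apply Units.ext
  show ((uD a : GL2) : Mat2) * ((uD b : GL2) : Mat2) = ((uD (a * b) : GL2) : Mat2)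
  rw [uD_coe, uD_coe, uD_coe, Matrix.mul_fin_two, mat2_lit]
  push_cast
  refine ⟨by ring, by ring, by ring, by ring⟩

lemma uD_one : uD 1 = 1 := by
  apply Units.ext
  show ((uD 1 : GL2) : Mat2) = (1 : Mat2)
  rw [uD_coe, Matrix.one_fin_two, mat2_lit]
  norm_num

lemma uD_pow (a : ℂˣ) (k : ℕ) : (uD a) ^ k = uD (a ^ k) := by
  induction k with
  | zero => simp [uD_one]
  | succ k ih => rw [pow_succ, pow_succ, ih, uD_mul]

/-- general element from nonzero determinant -/
def glM (A : Mat2) (h : A.det ≠ 0) : GL2 := Matrix.GeneralLinearGroup.mkOfDetNeZero A h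

@[simp] lemma glM_coe (A : Mat2) (h : A.det ≠ 0) : ((glM A h : GL2) : Mat2) = A := rfl

/-- the projection to `PGL2` -/
def pgl (X : GL2) : PGL2 := QuotientGroup.mk X

lemma pgl_surj : Function.Surjective pgl := QuotientGroup.mk_surjective

@[simp] lemma pgl_mul (X Y : GL2) : pgl (X * Y) = pgl X * pgl Y := rfl
@[simp] lemma pgl_one : pgl 1 = 1 := rfl
@[simp] lemma pgl_pow (X : GL2) (k : ℕ) : pgl (X ^ k) = (pgl X) ^ k := by
  induction k with
  | zero => rw [pow_zero, pow_zero]; rfl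
  | succ k ih => rw [pow_succ, pow_succ, ← ih]; rfl
@[simp] lemma pgl_inv (X : GL2) : pgl X⁻¹ = (pgl X)⁻¹ := rfl

/-- the center of `GL(2, ℂ)` consists of the scalar matrices -/
lemma mem_center_GL2_iff (Z : GL2) :
    Z ∈ Subgroup.center GL2 ↔ ∃ c : ℂˣ, (Z : Mat2) = (c : ℂ) • 1 := by
  constructor
  · intro hZ
    have hU : uU * Z = Z * uU := Subgroup.mem_center_iff.mp hZ uU
    have hL : uL * Z = Z * uL := Subgroup.mem_center_iff.mp hZ uL
    have hUm : ((uU : GL2) : Mat2) * (Z : Mat2) = (Z : Mat2) * ((uU : GL2) : Mat2) := by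
      have := congrArg (Units.val) hU
      simpa [Units.val_mul] using this
    have hLm : ((uL : GL2) : Mat2) * (Z : Mat2) = (Z : Mat2) * ((uL : GL2) : Mat2) := by
      have := congrArg (Units.val) hL
      simpa [Units.val_mul] using this
    set M : Mat2 := (Z : Mat2) with hMdef
    have hM : M = !![M 0 0, M 0 1; M 1 0, M 1 1] := Matrix.eta_fin_two M
    set p := M 0 0; set q := M 0 1; set r := M 1 0; set s := M 1 1
    rw [hM, uU_coe, Matrix.mul_fin_two, Matrix.mul_fin_two, mat2_lit] at hUm
    rw [hM, uL_coe, Matrix.mul_fin_two, Matrix.mul_fin_two, mat2_lit] at hLm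
    obtain ⟨e1, e2, e3, e4⟩ := hUm
    obtain ⟨g1, g2, g3, g4⟩ := hLm
    have hr : r = 0 := by linear_combination e1
    have hq : q = 0 := by linear_combination -g1
    have hps : p = s := by linear_combination -e2
    have hdet := det_ne_zero' Z
    rw [← hMdef, hM, Matrix.det_fin_two_of] at hdet
    have hp : p ≠ 0 := by
      intro h0
      apply hdet
      rw [h0, hr]
      ring
    refine ⟨Units.mk0 p hp, ?_⟩
    rw [hM, Matrix.one_fin_two, smul_mat2, mat2_lit]
    refine ⟨by simp, by simp [hq], by simp [hr], by simp [← hps]⟩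
  · rintro ⟨c, hc⟩
    rw [Subgroup.mem_center_iff]
    intro g
    apply Units.ext
    show (g : Mat2) * (Z : Mat2) = (Z : Mat2) * (g : Mat2)
    rw [hc, mul_smul_comm, smul_mul_assoc, mul_one, one_mul]

/-- projective equality of matrices -/
lemma pgl_eq_iff (X Y : GL2) :
    pgl X = pgl Y ↔ ∃ c : ℂˣ, (Y : Mat2) = (c : ℂ) • (X : Mat2) := by
  show (QuotientGroup.mk X : PGL2) = QuotientGroup.mk Y ↔ _
  rw [QuotientGroup.eq, mem_center_GL2_iff]
  constructor
  · rintro ⟨c, hc⟩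
    refine ⟨c, ?_⟩
    have h2 : X * (X⁻¹ * Y) = Y := mul_inv_cancel_left X Y
    have h3 := congrArg (Units.val) h2
    rw [Units.val_mul, hc] at h3
    rw [← h3, mul_smul_comm, mul_one]
  · rintro ⟨c, hc⟩
    refine ⟨c, ?_⟩
    rw [Units.val_mul, hc, mul_smul_comm]
    have h4 : (X⁻¹ : GL2) * X = 1 := inv_mul_cancel X
    have h5 := congrArg (Units.val) h4
    rw [Units.val_mul] at h5
    rw [h5, Units.val_one]

lemma pgl_eq_one_iff (X : GL2) :
    pgl X = 1 ↔ ∃ c : ℂˣ, (X : Mat2) = (c : ℂ) • 1 := by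
  rw [show (1 : PGL2) = pgl 1 from rfl, eq_comm, pgl_eq_iff]
  simp

lemma pgl_pow_eq_one_iff (X : GL2) (k : ℕ) :
    (pgl X) ^ k = 1 ↔ ∃ c : ℂˣ, ((X : Mat2)) ^ k = (c : ℂ) • 1 := by
  rw [← pgl_pow, pgl_eq_one_iff]
  simp [Units.val_pow_eq_pow_val]

lemma pgl_comm_iff (X G : GL2) :
    pgl X * pgl G = pgl G * pgl X ↔
      ∃ c : ℂˣ, (G : Mat2) * (X : Mat2) = (c : ℂ) • ((X : Mat2) * (G : Mat2)) := by
  rw [← pgl_mul, ← pgl_mul, pgl_eq_iff]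
  simp [Units.val_mul]

/-- the center of `PGL(2, ℂ)` is trivial -/
lemma center_PGL2 (z : PGL2) (hz : ∀ w : PGL2, z * w = w * z) : z = 1 := by
  obtain ⟨Z, rfl⟩ := pgl_surj z
  have hU := hz (pgl uU)
  have hL := hz (pgl uL)
  rw [pgl_comm_iff] at hU hL
  obtain ⟨c, hc⟩ := hU
  obtain ⟨c', hc'⟩ := hL
  set M : Mat2 := (Z : Mat2) with hMdef
  have hM : M = !![M 0 0, M 0 1; M 1 0, M 1 1] := Matrix.eta_fin_two M
  set p := M 0 0; set q := M 0 1; set r := M 1 0; set s := M 1 1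
  have hdet := det_ne_zero' Z
  rw [← hMdef, hM, Matrix.det_fin_two_of] at hdet
  rw [hM, uU_coe, Matrix.mul_fin_two, Matrix.mul_fin_two, smul_mat2, mat2_lit] at hc
  rw [hM, uL_coe, Matrix.mul_fin_two, Matrix.mul_fin_two, smul_mat2, mat2_lit] at hc'
  obtain ⟨e1, e2, e3, e4⟩ := hc
  obtain ⟨g1, g2, g3, g4⟩ := hc'
  -- from the U relation: r = 0 and p = s
  have hcr : (c : ℂ) = 1 ∧ r = 0 := by
    by_cases h1 : (c : ℂ) = 1
    · refine ⟨h1, ?_⟩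
      rw [h1] at e1
      linear_combination e1
    · exfalso
      have hr : r = 0 := by
        have hh : r * (1 - (c : ℂ)) = 0 := by linear_combination e3
        rcases mul_eq_zero.mp hh with h | h
        · exact h
        · exact absurd (by linear_combination -h) h1
      have hp : p = 0 := by
        have hh : p * (1 - (c : ℂ)) = 0 := by
          rw [hr] at e1
          linear_combination e1
        rcases mul_eq_zero.mp hh with h | h
        · exact h
        · exact absurd (by linear_combination -h) h1
      apply hdet
      rw [hp, hr]
      ring
  obtain ⟨hc1, hr⟩ := hcr
  have hps : p = s := by
    rw [hc1] at e2
    linear_combination -e2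
  have hcq : q = 0 := by
    by_cases h1 : (c' : ℂ) = 1
    · rw [h1] at g1
      linear_combination -g1
    · exfalso
      have hq : q = 0 := by
        have hh : q * ((c' : ℂ) - 1) = 0 := by linear_combination -g2
        rcases mul_eq_zero.mp hh with h | h
        · exact h
        · exact absurd (by linear_combination h) h1
      have hp : p = 0 := by
        have hh : p * (1 - (c' : ℂ)) = 0 := by
          rw [hq] at g1
          linear_combination g1
        rcases mul_eq_zero.mp hh with h | h
        · exact h
        · exact absurd (by linear_combination -h) h1
      apply hdet
      rw [hp, hq]
      ring
  have hp : p ≠ 0 := by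
    intro h0
    apply hdet
    rw [h0, hr]
    ring
  rw [pgl_eq_one_iff]
  refine ⟨Units.mk0 p hp, ?_⟩
  rw [← hMdef, hM, Matrix.one_fin_two, smul_mat2, mat2_lit]
  exact ⟨by simp, by simp [hcq], by simp [hr], by simp [← hps]⟩

/-! ### The invariant sets -/

def Tset (m : ℕ) (g : PGL2) : Set PGL2 := {x | x ^ m = 1 ∧ x * g = g * x}

lemma conj_pow_grp {G : Type*} [Group G] (p x : G) (k : ℕ) :
    (p * x * p⁻¹) ^ k = p * x ^ k * p⁻¹ := by
  induction k with
  | zero => group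
  | succ k ih => rw [pow_succ, pow_succ, ih]; group

lemma Tset_conj {m : ℕ} {g : PGL2} (p x : PGL2) :
    x ∈ Tset m (p⁻¹ * g * p) ↔ p * x * p⁻¹ ∈ Tset m g := by
  simp only [Tset, Set.mem_setOf_eq]
  constructor
  · rintro ⟨h1, h2⟩
    constructor
    · rw [conj_pow_grp, h1]; group
    · calc (p * x * p⁻¹) * g = p * (x * (p⁻¹ * g * p)) * p⁻¹ := by group
        _ = p * ((p⁻¹ * g * p) * x) * p⁻¹ := by rw [h2]
        _ = g * (p * x * p⁻¹) := by group
  · rintro ⟨h1, h2⟩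
    constructor
    · have hx : x ^ m = p⁻¹ * ((p * x * p⁻¹) ^ m) * p := by rw [conj_pow_grp]; group
      rw [hx, h1]; group
    · calc x * (p⁻¹ * g * p) = p⁻¹ * ((p * x * p⁻¹) * g) * p := by group
        _ = p⁻¹ * (g * (p * x * p⁻¹)) * p := by rw [h2]
        _ = (p⁻¹ * g * p) * x := by group

/-- diagonal powers -/
lemma diag_pow (a : ℂ) (k : ℕ) : (!![a, 0; 0, 1] : Mat2) ^ k = !![a ^ k, 0; 0, 1] := by
  induction k with
  | zero => simp [Matrix.one_fin_two]
  | succ k ih =>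
    rw [pow_succ, pow_succ, ih, Matrix.mul_fin_two, mat2_lit]
    refine ⟨by ring, by ring, by ring, by ring⟩

/-- shear powers -/
lemma shear_pow (w : ℂ) (k : ℕ) : (!![1, w; 0, 1] : Mat2) ^ k = !![1, (k : ℂ) * w; 0, 1] := by
  induction k with
  | zero => simp [Matrix.one_fin_two]
  | succ k ih =>
    rw [pow_succ, ih, Matrix.mul_fin_two, mat2_lit]
    push_cast
    refine ⟨by ring, by ring, by ring, by ring⟩

/-- membership of diagonal roots of unity in the invariant set of a diagonal element -/
lemma mem_Tset_uD {k : ℕ} (A t : ℂˣ) (ht : t ^ k = 1) :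
    pgl (uD t) ∈ Tset k (pgl (uD A)) := by
  constructor
  · rw [← pgl_pow, uD_pow, ht, uD_one, pgl_one]
  · rw [← pgl_mul, ← pgl_mul, uD_mul, uD_mul, mul_comm]

/-- injectivity of `t ↦ pgl (uD t)` -/
lemma uD_inj {t t' : ℂˣ} (h : pgl (uD t) = pgl (uD t')) : t = t' := by
  rw [pgl_eq_iff] at h
  obtain ⟨c, hc⟩ := h
  rw [uD_coe, uD_coe, smul_mat2, mat2_lit] at hc
  obtain ⟨h1, _, _, h4⟩ := hc
  have hco : (c : ℂ) = 1 := by linear_combination -h4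
  apply Units.ext
  rw [h1, hco, one_mul]

/-- classification of elements of `Tset m (pgl (uD A))` -/
lemma Tset_uD_mem {m : ℕ} (A : ℂˣ) (hA1 : (A : ℂ) ≠ 1) {x : PGL2}
    (hx : x ∈ Tset m (pgl (uD A))) :
    (∃ t : ℂˣ, t ^ m = 1 ∧ x = pgl (uD t)) ∨
      ((A : ℂ) = -1 ∧ ∃ W : GL2, x = pgl W ∧ (W : Mat2) 0 0 = 0 ∧ (W : Mat2) 1 1 = 0) := by
  obtain ⟨X, rfl⟩ := pgl_surj x
  obtain ⟨h1, h2⟩ := hx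
  rw [pgl_comm_iff] at h2
  obtain ⟨c, hc⟩ := h2
  set M : Mat2 := (X : Mat2) with hMdef
  have hM : M = !![M 0 0, M 0 1; M 1 0, M 1 1] := Matrix.eta_fin_two M
  set p := M 0 0; set q := M 0 1; set r := M 1 0; set s := M 1 1
  have hdet := det_ne_zero' X
  rw [← hMdef, hM, Matrix.det_fin_two_of] at hdet
  rw [uD_coe, hM, Matrix.mul_fin_two, Matrix.mul_fin_two, smul_mat2, mat2_lit] at hc
  obtain ⟨e1, e2, e3, e4⟩ := hc
  -- e1 : A*p + 0*r = c*(p*A + q*0), e2 : A*q + 0*s = c*(p*0 + q*1),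
  -- e3 : 0*p + 1*r = c*(r*A + s*0), e4 : 0*q + 1*s = c*(r*0 + s*1)
  by_cases hc1 : (c : ℂ) = 1
  · -- diagonal case
    left
    rw [hc1] at e1 e2 e3 e4
    have hq : q = 0 := by
      have hh : q * ((A : ℂ) - 1) = 0 := by linear_combination e2
      rcases mul_eq_zero.mp hh with h | h
      · exact h
      · exact absurd (by linear_combination h) hA1
    have hr : r = 0 := by
      have hh : r * ((A : ℂ) - 1) = 0 := by linear_combination -e3
      rcases mul_eq_zero.mp hh with h | h
      · exact h
      · exact absurd (by linear_combination h) hA1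
    have hs : s ≠ 0 := by
      intro h0
      apply hdet
      rw [h0, hq]
      ring
    have hp : p ≠ 0 := by
      intro h0
      apply hdet
      rw [h0, hr]
      ring
    have hts : p / s ≠ 0 := div_ne_zero hp hs
    have hXM : (X : Mat2) = s • !![p / s, 0; 0, 1] := by
      rw [← hMdef, hM, smul_mat2, mat2_lit]
      refine ⟨by field_simp, by rw [hq]; ring, by rw [hr]; ring, by ring⟩
    refine ⟨Units.mk0 (p / s) hts, ?_, ?_⟩
    · -- torsion
      rw [pgl_pow_eq_one_iff] at h1
      obtain ⟨c', hc'⟩ := h1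
      rw [hXM, _root_.smul_pow, diag_pow, Matrix.one_fin_two, smul_mat2, smul_mat2,
        mat2_lit] at hc'
      obtain ⟨f1, _, _, f4⟩ := hc'
      apply Units.ext
      rw [Units.val_pow_eq_pow_val, Units.val_one]
      show ((p / s) ^ m : ℂ) = 1
      have hsm : s ^ m ≠ 0 := pow_ne_zero _ hs
      have hff : s ^ m * ((p / s) ^ m - 1) = 0 := by linear_combination f1 - f4
      rcases mul_eq_zero.mp hff with h | h
      · exact absurd h hsm
      · linear_combination h
    · -- equality with the diagonal class
      rw [pgl_eq_iff]
      refine ⟨(Units.mk0 s hs)⁻¹, ?_⟩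
      have hval : (((Units.mk0 s hs)⁻¹ : ℂˣ) : ℂ) = s⁻¹ := by simp
      rw [uD_coe, hXM, hval, smul_smul, inv_mul_cancel₀ hs, one_smul]
      rfl
  · -- antidiagonal case
    right
    have hs0 : s = 0 := by
      have hh : s * (1 - (c : ℂ)) = 0 := by linear_combination e4
      rcases mul_eq_zero.mp hh with h | h
      · exact h
      · exact absurd (by linear_combination -h) hc1
    have hp0 : p = 0 := by
      have hA0 : (A : ℂ) ≠ 0 := Units.ne_zero A
      have hh : p * (A : ℂ) * (1 - (c : ℂ)) = 0 := by linear_combination e1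
      rcases mul_eq_zero.mp hh with h | h
      · rcases mul_eq_zero.mp h with h' | h'
        · exact h'
        · exact absurd h' hA0
      · exact absurd (by linear_combination -h) hc1
    have hq0 : q ≠ 0 := by
      intro h0
      apply hdet
      rw [h0, hp0]
      ring
    have hr0 : r ≠ 0 := by
      intro h0
      apply hdet
      rw [h0, hp0]
      ring
    have hcA : (c : ℂ) = (A : ℂ) := by
      have hh : q * ((A : ℂ) - (c : ℂ)) = 0 := by linear_combination e2
      rcases mul_eq_zero.mp hh with h | h
      · exact absurd h hq0
      · linear_combination -h
    have hAA : (A : ℂ) * (A : ℂ) = 1 := by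
      have hh : r * (1 - (c : ℂ) * (A : ℂ)) = 0 := by linear_combination e3
      rcases mul_eq_zero.mp hh with h | h
      · exact absurd h hr0
      · rw [hcA] at h
        linear_combination -h
    have hAm : (A : ℂ) = -1 := by
      have hh : ((A : ℂ) - 1) * ((A : ℂ) + 1) = 0 := by linear_combination hAA
      rcases mul_eq_zero.mp hh with h | h
      · exact absurd (by linear_combination h) hA1
      · linear_combination h
    exact ⟨hAm, X, rfl, hp0, hs0⟩

/-- with odd exponent or non-involutive `A`, all elements of `Tset` are diagonal classes -/
lemma Tset_uD_rep {m : ℕ} (A : ℂˣ) (hA1 : (A : ℂ) ≠ 1)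
    (hside : (A : ℂ) ≠ -1 ∨ m % 2 = 1) {x : PGL2} (hx : x ∈ Tset m (pgl (uD A))) :
    ∃ t : ℂˣ, t ^ m = 1 ∧ x = pgl (uD t) := by
  rcases Tset_uD_mem A hA1 hx with h | ⟨hAm, W, hxW, hW00, hW11⟩
  · exact h
  · exfalso
    rcases hside with h | hodd
    · exact h hAm
    · -- antidiagonal elements are not m-torsion for odd m
      set N : Mat2 := (W : Mat2) with hNdef
      have hN : N = !![N 0 0, N 0 1; N 1 0, N 1 1] := Matrix.eta_fin_two N
      rw [hW00, hW11] at hN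
      set qq := N 0 1 with hqqdef
      set rr := N 1 0 with hrrdef
      have hdet := det_ne_zero' W
      rw [← hNdef, hN, Matrix.det_fin_two_of] at hdet
      have hqr : qq * rr ≠ 0 := by
        intro h0
        apply hdet
        linear_combination -h0
      have hW2 : (W : Mat2) ^ 2 = (qq * rr) • 1 := by
        rw [← hNdef, sq, hN, Matrix.mul_fin_two, Matrix.one_fin_two, smul_mat2, mat2_lit]
        refine ⟨by ring, by ring, by ring, by ring⟩
      have hx2 : (pgl W) ^ 2 = 1 := by
        rw [pgl_pow_eq_one_iff]
        exact ⟨Units.mk0 _ hqr, hW2⟩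
      have hm2 : m = 2 * (m / 2) + 1 := by omega
      have hxm : (pgl W) ^ m = pgl W := by
        rw [hm2, pow_succ, pow_mul, hx2, one_pow, one_mul]
      have hx1 : pgl W = 1 := by
        rw [← hxm]
        rw [hxW] at hx
        exact hx.1
      rw [pgl_eq_one_iff] at hx1
      obtain ⟨c, hc⟩ := hx1
      rw [← hNdef, hN, Matrix.one_fin_two, smul_mat2, mat2_lit] at hc
      obtain ⟨k1, _, _, _⟩ := hc
      exact (Units.ne_zero c) (by linear_combination -k1)

/-- exact count on the diagonal side -/
lemma Tset_card {k : ℕ} (hk : 1 ≤ k) (A : ℂˣ) (hA1 : (A : ℂ) ≠ 1) (hAm : (A : ℂ) ≠ -1) :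
    ∃ Ψ : {t : ℂ // t ∈ nthRootsFinset k (1 : ℂ)} → ↥(Tset k (pgl (uD A))), Function.Bijective Ψ := by
  have hmem : ∀ t : {t : ℂ // t ∈ nthRootsFinset k (1 : ℂ)}, (t : ℂ) ≠ 0 := by
    intro t
    have ht : (t : ℂ) ^ k = 1 := (mem_nthRootsFinset (by omega) (1 : ℂ)).mp t.2
    intro h0
    rw [h0, zero_pow (by omega)] at ht
    exact zero_ne_one ht
  refine ⟨fun t => ⟨pgl (uD (Units.mk0 (t : ℂ) (hmem t))), ?_⟩, ?_, ?_⟩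
  · apply mem_Tset_uD
    apply Units.ext
    rw [Units.val_pow_eq_pow_val, Units.val_one]
    show ((t : ℂ) ^ k : ℂ) = 1
    exact (mem_nthRootsFinset (by omega) (1 : ℂ)).mp t.2
  · intro t t' htt
    have h1 : pgl (uD (Units.mk0 (t : ℂ) (hmem t))) = pgl (uD (Units.mk0 (t' : ℂ) (hmem t'))) :=
      congrArg Subtype.val htt
    have h2 := uD_inj h1
    apply Subtype.ext
    exact congrArg Units.val h2
  · rintro ⟨x, hx⟩
    obtain ⟨t, ht1, ht2⟩ := Tset_uD_rep A hA1 (Or.inl hAm) hx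
    have htm : (t : ℂ) ∈ nthRootsFinset k (1 : ℂ) := by
      rw [mem_nthRootsFinset (by omega) (1 : ℂ)]
      rw [← Units.val_pow_eq_pow_val, ht1, Units.val_one]
    refine ⟨⟨(t : ℂ), htm⟩, ?_⟩
    apply Subtype.ext
    show pgl (uD (Units.mk0 (t : ℂ) _)) = x
    rw [ht2]
    congr 1
    congr 1
    exact Units.ext rfl

/-- for `m ≥ 2`, the `m`-torsion of `PGL2` is infinite -/
lemma Tset_one_infinite {m : ℕ} (hm2 : 2 ≤ m) : (Tset m (1 : PGL2)).Infinite := by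
  set ζ : ℂ := Complex.exp (2 * Real.pi * Complex.I / m) with hζdef
  have hζ : IsPrimitiveRoot ζ m := Complex.isPrimitiveRoot_exp m (by omega)
  have hζm : ζ ^ m = 1 := hζ.pow_eq_one
  have hζ1 : ζ ≠ 1 := hζ.ne_one (by omega)
  have hζ0 : ζ ≠ 0 := by
    intro h0
    rw [h0, zero_pow (by omega)] at hζm
    exact zero_ne_one hζm
  set ζu : ℂˣ := Units.mk0 ζ hζ0 with hζudef
  have hζu : ζu ^ m = 1 := by
    apply Units.ext
    show (ζ ^ m : ℂ) = 1
    exact hζm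
  apply Set.infinite_of_injective_forall_mem
    (f := fun k : ℕ => pgl (ShU k * uD ζu * (ShU k)⁻¹))
  case hi =>
    intro j k hjk
    rw [pgl_eq_iff] at hjk
    obtain ⟨c, hc⟩ := hjk
    have hval : ∀ s : ℂ, (((ShU s * uD ζu * (ShU s)⁻¹ : GL2)) : Mat2) =
        !![ζ, s * (1 - ζ); 0, 1] := by
      intro s
      rw [Units.val_mul, Units.val_mul, ShU_coe, ShU_inv_coe, uD_coe]
      show (!![1, s; 0, 1] * !![ζ, 0; 0, 1] : Mat2) * !![1, -s; 0, 1] = _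
      rw [Matrix.mul_fin_two, Matrix.mul_fin_two, mat2_lit]
      refine ⟨by ring, by ring, by ring, by ring⟩
    rw [hval, hval, smul_mat2, mat2_lit] at hc
    obtain ⟨k1, k2, _, k4⟩ := hc
    have hco : (c : ℂ) = 1 := by linear_combination -k4
    rw [hco] at k2
    have : (k : ℂ) = (j : ℂ) := by
      have hsub : (1 : ℂ) - ζ ≠ 0 := by
        intro h0
        exact hζ1 (by linear_combination -h0)
      have hkj : ((k : ℂ) - (j : ℂ)) * (1 - ζ) = 0 := by linear_combination k2
      rcases mul_eq_zero.mp hkj with h | h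
      · linear_combination h
      · exact absurd h hsub
    exact_mod_cast this.symm
  · intro k
    constructor
    · rw [← pgl_pow]
      have : (ShU (k : ℂ) * uD ζu * (ShU (k : ℂ))⁻¹) ^ m = 1 := by
        rw [conj_pow_grp, uD_pow, hζu, uD_one, mul_one, mul_inv_cancel]
      rw [this, pgl_one]
    · rw [mul_one, one_mul]

/-- for even `m`, the invariant set of the involution `diag(-1,1)` is infinite -/
lemma Tset_neg_one_infinite {m : ℕ} (heven : m % 2 = 0) (A : ℂˣ) (hA : (A : ℂ) = -1) :
    (Tset m (pgl (uD A))).Infinite := by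
  have hne : ∀ k : ℕ, ((k : ℂ) + 1) ≠ 0 := by
    intro k h0
    have : ((k + 1 : ℕ) : ℂ) = 0 := by push_cast; linear_combination h0
    exact (Nat.cast_ne_zero.mpr (Nat.succ_ne_zero k)) this
  have hwcoe : ∀ k : ℕ, ((glM !![0, 1; (k : ℂ) + 1, 0]
      (by rw [Matrix.det_fin_two_of]; intro h0; exact hne k (by linear_combination -h0)) : GL2) : Mat2)
      = !![0, 1; (k : ℂ) + 1, 0] := fun k => rfl
  apply Set.infinite_of_injective_forall_mem
    (f := fun k : ℕ => pgl (glM !![0, 1; (k : ℂ) + 1, 0]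
      (by rw [Matrix.det_fin_two_of]; intro h0; exact hne k (by linear_combination -h0))))
  case hi =>
    intro j k hjk
    rw [pgl_eq_iff] at hjk
    obtain ⟨c, hc⟩ := hjk
    rw [hwcoe, hwcoe, smul_mat2, mat2_lit] at hc
    obtain ⟨_, k2, k3, _⟩ := hc
    have hco : (c : ℂ) = 1 := by linear_combination -k2
    rw [hco] at k3
    have : (j : ℂ) = (k : ℂ) := by linear_combination -k3
    exact_mod_cast this
  · intro k
    constructor
    · rw [pgl_pow_eq_one_iff]
      have hsq : (!![0, 1; (k : ℂ) + 1, 0] : Mat2) ^ 2 = ((k : ℂ) + 1) • 1 := by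
        rw [sq, Matrix.mul_fin_two, Matrix.one_fin_two, smul_mat2, mat2_lit]
        refine ⟨by ring, by ring, by ring, by ring⟩
      have hm : m = 2 * (m / 2) := by omega
      have hkey : (!![0, 1; (k : ℂ) + 1, 0] : Mat2) ^ m = (((k : ℂ) + 1) ^ (m / 2)) • 1 := by
        conv_lhs => rw [hm]
        rw [pow_mul, hsq, _root_.smul_pow, one_pow]
      refine ⟨(Units.mk0 ((k : ℂ) + 1) (hne k)) ^ (m / 2), ?_⟩
      rw [hwcoe, hkey, Units.val_pow_eq_pow_val]
      rfl
    · rw [pgl_comm_iff]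
      refine ⟨-1, ?_⟩
      rw [uD_coe, hA, hwcoe, Matrix.mul_fin_two, Matrix.mul_fin_two, Units.val_neg,
        Units.val_one, smul_mat2, mat2_lit]
      refine ⟨by ring, by ring, by ring, by ring⟩

/-- elements commuting with the unipotent class and torsion are trivial -/
lemma Tset_uU_sub {m : ℕ} (hm : 1 ≤ m) : Tset m (pgl uU) ⊆ {1} := by
  intro x hx
  obtain ⟨X, rfl⟩ := pgl_surj x
  obtain ⟨h1, h2⟩ := hx
  rw [pgl_comm_iff] at h2
  obtain ⟨c, hc⟩ := h2
  set M : Mat2 := (X : Mat2) with hMdef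
  have hM : M = !![M 0 0, M 0 1; M 1 0, M 1 1] := Matrix.eta_fin_two M
  set p := M 0 0; set q := M 0 1; set r := M 1 0; set s := M 1 1
  have hdet := det_ne_zero' X
  rw [← hMdef, hM, Matrix.det_fin_two_of] at hdet
  rw [uU_coe, hM, Matrix.mul_fin_two, Matrix.mul_fin_two, smul_mat2, mat2_lit] at hc
  obtain ⟨e1, e2, e3, e4⟩ := hc
  -- e1 : p + r = c * p, e2 : q + s = c * (p + q), e3 : r = c * r, e4 : s = c * (r + s)
  have hcr : (c : ℂ) = 1 ∧ r = 0 := by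
    by_cases hc1 : (c : ℂ) = 1
    · refine ⟨hc1, ?_⟩
      rw [hc1] at e1
      linear_combination e1
    · exfalso
      have hr : r = 0 := by
        have hh : r * (1 - (c : ℂ)) = 0 := by linear_combination e3
        rcases mul_eq_zero.mp hh with h | h
        · exact h
        · exact absurd (by linear_combination -h) hc1
      have hp : p = 0 := by
        have hh : p * (1 - (c : ℂ)) = 0 := by
          rw [hr] at e1
          linear_combination e1
        rcases mul_eq_zero.mp hh with h | h
        · exact h
        · exact absurd (by linear_combination -h) hc1
      apply hdet
      rw [hp, hr]
      ring
  obtain ⟨hc1, hr⟩ := hcr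
  have hps : p = s := by
    rw [hc1] at e2
    linear_combination -e2
  have hp : p ≠ 0 := by
    intro h0
    apply hdet
    rw [h0, hr]
    ring
  -- now X = p • !![1, q/p; 0, 1]
  have hXM : (X : Mat2) = p • !![1, q / p; 0, 1] := by
    rw [← hMdef, hM, smul_mat2, mat2_lit]
    refine ⟨by ring, by field_simp, by rw [hr]; ring, by rw [← hps]; ring⟩
  rw [pgl_pow_eq_one_iff] at h1
  obtain ⟨c', hc'⟩ := h1
  rw [hXM, _root_.smul_pow, shear_pow, Matrix.one_fin_two, smul_mat2, smul_mat2, mat2_lit] at hc'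
  obtain ⟨f1, f2, _, _⟩ := hc'
  have hpm : p ^ m ≠ 0 := pow_ne_zero _ hp
  have hq : q = 0 := by
    have hm0 : (m : ℂ) ≠ 0 := by
      simp only [ne_eq, Nat.cast_eq_zero]
      omega
    have hh : p ^ m * ((m : ℂ) * (q / p)) = 0 := by linear_combination f2
    rcases mul_eq_zero.mp hh with h | h
    · exact absurd h hpm
    · rcases mul_eq_zero.mp h with h' | h'
      · exact absurd h' hm0
      · rcases div_eq_zero_iff.mp h' with h'' | h''
        · exact h''
        · exact absurd h'' hp
  show pgl X = 1
  rw [pgl_eq_one_iff]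
  refine ⟨Units.mk0 p hp, ?_⟩
  rw [← hMdef, hM, Matrix.one_fin_two, smul_mat2, mat2_lit]
  exact ⟨by simp, by simp [hq], by simp [hr], by simp [← hps]⟩

lemma unit_conj_eq {G Q T : GL2} (h : G * Q = Q * T) : Q⁻¹ * G * Q = T := by
  rw [mul_assoc, h, ← mul_assoc, inv_mul_cancel, one_mul]

/-- normal form under conjugation in `PGL2` -/
lemma normal_form (g : PGL2) :
    ∃ p : PGL2, p⁻¹ * g * p = 1 ∨ p⁻¹ * g * p = pgl uU ∨
      ∃ a : ℂˣ, (a : ℂ) ≠ 1 ∧ p⁻¹ * g * p = pgl (uD a) := by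
  obtain ⟨G, rfl⟩ := pgl_surj g
  -- Step 1: triangularize
  have step1 : ∃ (Q Tu : GL2) (α β δ : ℂ) (hα : α ≠ 0) (hδ : δ ≠ 0),
      (Tu : Mat2) = !![α, β; 0, δ] ∧ Q⁻¹ * G * Q = Tu := by
    set M : Mat2 := (G : Mat2) with hMdef
    have hM : M = !![M 0 0, M 0 1; M 1 0, M 1 1] := Matrix.eta_fin_two M
    set a := M 0 0; set b := M 0 1; set cc := M 1 0; set d := M 1 1
    have hdet := det_ne_zero' G
    rw [← hMdef, hM, Matrix.det_fin_two_of] at hdet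
    by_cases hc0 : cc = 0
    · have ha : a ≠ 0 := by
        intro h0
        apply hdet
        rw [h0, hc0]
        ring
      have hd : d ≠ 0 := by
        intro h0
        apply hdet
        rw [h0, hc0]
        ring
      refine ⟨1, G, a, b, d, ha, hd, ?_, by rw [inv_one, one_mul, mul_one]⟩
      rw [← hMdef, hM, hc0]
    · obtain ⟨st, hst⟩ := IsAlgClosed.exists_pow_nat_eq
        ((a + d) ^ 2 - 4 * (a * d - b * cc)) (n := 2) (by norm_num)
      set μ : ℂ := (a + d + st) / 2 with hμdef
      have hchar : μ ^ 2 - (a + d) * μ + (a * d - b * cc) = 0 := by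
        rw [hμdef]
        linear_combination hst / 4
      have hmd : μ * (a + d - μ) = a * d - b * cc := by linear_combination -hchar
      have hμ0 : μ ≠ 0 := by
        intro h0
        apply hdet
        rw [h0] at hmd
        linear_combination -hmd
      have hδ0 : a + d - μ ≠ 0 := by
        intro h0
        apply hdet
        rw [h0] at hmd
        linear_combination -hmd
      refine ⟨glM !![μ - d, 1; cc, 0]
          (by rw [Matrix.det_fin_two_of]; intro h0; exact hc0 (by linear_combination -h0)),
        glM !![μ, 1; 0, a + d - μ]
          (by rw [Matrix.det_fin_two_of]; intro h0; apply hdet; linear_combination h0 - hmd),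
        μ, 1, a + d - μ, hμ0, hδ0, rfl, ?_⟩
      apply unit_conj_eq
      apply Units.ext
      rw [Units.val_mul, Units.val_mul]
      show (G : Mat2) * !![μ - d, 1; cc, 0] = !![μ - d, 1; cc, 0] * !![μ, 1; 0, a + d - μ]
      rw [← hMdef, hM, Matrix.mul_fin_two, Matrix.mul_fin_two, mat2_lit]
      refine ⟨by linear_combination -hchar, by ring, by ring, by ring⟩
  obtain ⟨Q, Tu, α, β, δ, hα, hδ, hTu, hconj⟩ := step1
  have hconjP : (pgl Q)⁻¹ * pgl G * pgl Q = pgl Tu := by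
    have := congrArg pgl hconj
    simpa only [pgl_mul, pgl_inv] using this
  by_cases hαδ : α = δ
  · by_cases hβ : β = 0
    · -- scalar
      refine ⟨pgl Q, Or.inl ?_⟩
      rw [hconjP, pgl_eq_one_iff]
      refine ⟨Units.mk0 α hα, ?_⟩
      have hval : ((Units.mk0 α hα : ℂˣ) : ℂ) = α := rfl
      rw [hTu, Matrix.one_fin_two, smul_mat2, hval, mat2_lit]
      exact ⟨by ring, by rw [hβ]; ring, by ring, by rw [← hαδ]; ring⟩
    · -- conjugate to the unipotent
      set R : GL2 := glM !![β, 0; 0, α]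
        (by rw [Matrix.det_fin_two_of]
            intro h0
            exact (mul_ne_zero hβ hα) (by linear_combination h0)) with hRdef
      set aU : GL2 := glM !![α, α; 0, α]
        (by rw [Matrix.det_fin_two_of]
            intro h0
            exact hα (by
              rcases mul_eq_zero.mp (show α * α = 0 by linear_combination h0) with h | h
              · exact h
              · exact h)) with haUdef
      have hTR : Tu * R = R * aU := by
        apply Units.ext
        rw [Units.val_mul, Units.val_mul, hTu, hRdef, haUdef, glM_coe, glM_coe]
        rw [Matrix.mul_fin_two, Matrix.mul_fin_two, mat2_lit]
        refine ⟨by ring, by ring, by ring, by rw [← hαδ]; ring⟩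
      refine ⟨pgl Q * pgl R, Or.inr (Or.inl ?_)⟩
      have hcomb : (pgl Q * pgl R)⁻¹ * pgl G * (pgl Q * pgl R) =
          (pgl R)⁻¹ * ((pgl Q)⁻¹ * pgl G * pgl Q) * pgl R := by group
      rw [hcomb, hconjP, ← pgl_inv, ← pgl_mul, ← pgl_mul, unit_conj_eq hTR]
      rw [pgl_eq_iff]
      refine ⟨(Units.mk0 α hα)⁻¹, ?_⟩
      rw [uU_coe, haUdef, glM_coe]
      have hval : (((Units.mk0 α hα)⁻¹ : ℂˣ) : ℂ) = α⁻¹ := by simp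
      rw [hval, smul_mat2, mat2_lit]
      refine ⟨by field_simp, by field_simp, by ring, by field_simp⟩
  · -- distinct eigenvalues
    have hδα : δ - α ≠ 0 := sub_ne_zero.mpr (Ne.symm hαδ)
    set R : GL2 := glM !![1, β; 0, δ - α]
      (by rw [Matrix.det_fin_two_of]
          intro h0
          exact hδα (by linear_combination h0)) with hRdef
    set Dd : GL2 := glM !![α, 0; 0, δ]
      (by rw [Matrix.det_fin_two_of]
          intro h0
          rcases mul_eq_zero.mp (show α * δ = 0 by linear_combination h0) with h | h
          · exact hα h
          · exact hδ h) with hDdef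
    have hTR : Tu * R = R * Dd := by
      apply Units.ext
      rw [Units.val_mul, Units.val_mul, hTu, hRdef, hDdef, glM_coe, glM_coe]
      rw [Matrix.mul_fin_two, Matrix.mul_fin_two, mat2_lit]
      refine ⟨by ring, by ring, by ring, by ring⟩
    refine ⟨pgl Q * pgl R, Or.inr (Or.inr ⟨Units.mk0 (α / δ) (div_ne_zero hα hδ), ?_, ?_⟩)⟩
    · intro h1
      apply hαδ
      rw [Units.val_mk0, div_eq_one_iff_eq hδ] at h1
      exact h1
    · have hcomb : (pgl Q * pgl R)⁻¹ * pgl G * (pgl Q * pgl R) =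
          (pgl R)⁻¹ * ((pgl Q)⁻¹ * pgl G * pgl Q) * pgl R := by group
      rw [hcomb, hconjP, ← pgl_inv, ← pgl_mul, ← pgl_mul, unit_conj_eq hTR]
      rw [pgl_eq_iff]
      refine ⟨(Units.mk0 δ hδ)⁻¹, ?_⟩
      rw [uD_coe, hDdef, glM_coe]
      have hval : (((Units.mk0 δ hδ)⁻¹ : ℂˣ) : ℂ) = δ⁻¹ := by simp
      rw [hval, smul_mat2, mat2_lit]
      refine ⟨by show α / δ = δ⁻¹ * α; rw [div_eq_inv_mul], by ring, by ring, by field_simp⟩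

/-- the upper bound: the invariant set is infinite or embeds in the `m`-th roots of unity -/
lemma upper (m : ℕ) (hm : 1 ≤ m) (g : PGL2) :
    (Tset m g).Infinite ∨
      ∃ φ : ↥(Tset m g) → {t : ℂ // t ∈ nthRootsFinset m (1 : ℂ)}, Function.Injective φ := by
  have hmem1 : (1 : ℂ) ∈ nthRootsFinset m (1 : ℂ) := (mem_nthRootsFinset (by omega) (1 : ℂ)).mpr (one_pow m)
  have triv : ∀ S : Set PGL2, S ⊆ {1} →
      ∃ φ : ↥S → {t : ℂ // t ∈ nthRootsFinset m (1 : ℂ)}, Function.Injective φ := by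
    intro S hS
    refine ⟨fun _ => ⟨1, hmem1⟩, ?_⟩
    intro x y _
    apply Subtype.ext
    have hx := hS x.2
    have hy := hS y.2
    simp only [Set.mem_singleton_iff] at hx hy
    rw [hx, hy]
  obtain ⟨p, hp⟩ := normal_form g
  have trans_inf : ∀ h : PGL2, p⁻¹ * g * p = h → (Tset m h).Infinite → (Tset m g).Infinite := by
    intro h hph hinf
    haveI : Infinite ↥(Tset m h) := Set.infinite_coe_iff.mpr hinf
    apply Set.infinite_of_injective_forall_mem
      (f := fun x : ↥(Tset m h) => p * (x : PGL2) * p⁻¹)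
    case hi =>
      intro x y hxy
      apply Subtype.ext
      exact mul_left_cancel (mul_right_cancel hxy)
    · intro x
      apply (Tset_conj p (x : PGL2)).mp
      rw [hph]
      exact x.2
  have trans_inj : ∀ h : PGL2, p⁻¹ * g * p = h →
      (∃ φ : ↥(Tset m h) → {t : ℂ // t ∈ nthRootsFinset m (1 : ℂ)}, Function.Injective φ) →
      ∃ φ : ↥(Tset m g) → {t : ℂ // t ∈ nthRootsFinset m (1 : ℂ)}, Function.Injective φ := by
    rintro h hph ⟨φ, hφ⟩
    have hmem : ∀ x : ↥(Tset m g), p⁻¹ * (x : PGL2) * p ∈ Tset m h := by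
      intro x
      rw [← hph]
      apply (Tset_conj p (p⁻¹ * (x : PGL2) * p)).mpr
      have hxx : p * (p⁻¹ * (x : PGL2) * p) * p⁻¹ = (x : PGL2) := by group
      rw [hxx]
      exact x.2
    refine ⟨fun x => φ ⟨_, hmem x⟩, ?_⟩
    intro x y hxy
    have h2 := hφ hxy
    have h3 : p⁻¹ * (x : PGL2) * p = p⁻¹ * (y : PGL2) * p := congrArg Subtype.val h2
    apply Subtype.ext
    exact mul_left_cancel (mul_right_cancel h3)
  rcases hp with hp | hp | ⟨a, ha1, hp⟩
  · by_cases hm2 : 2 ≤ m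
    · exact Or.inl (trans_inf 1 hp (Tset_one_infinite hm2))
    · right
      have hm1 : m = 1 := by omega
      apply triv
      intro x hx
      have hx1 := hx.1
      rw [hm1, pow_one] at hx1
      simpa using hx1
  · right
    exact trans_inj (pgl uU) hp (triv _ (Tset_uU_sub hm))
  · by_cases hAm : (a : ℂ) = -1
    · by_cases hpar : m % 2 = 0
      · exact Or.inl (trans_inf _ hp (Tset_neg_one_infinite hpar a hAm))
      · right
        apply trans_inj _ hp
        have hrep : ∀ x : ↥(Tset m (pgl (uD a))),
            ∃ t : ℂˣ, t ^ m = 1 ∧ (x : PGL2) = pgl (uD t) :=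
          fun x => Tset_uD_rep a ha1 (Or.inr (by omega)) x.2
        choose t ht1 ht2 using hrep
        refine ⟨fun x => ⟨((t x : ℂˣ) : ℂ), (mem_nthRootsFinset (by omega) (1 : ℂ)).mpr
          (by rw [← Units.val_pow_eq_pow_val, ht1 x, Units.val_one])⟩, ?_⟩
        intro x y hxy
        have hcc : ((t x : ℂˣ) : ℂ) = ((t y : ℂˣ) : ℂ) := congrArg Subtype.val hxy
        have htu : t x = t y := Units.ext hcc
        apply Subtype.ext
        rw [ht2 x, ht2 y, htu]
    · right
      apply trans_inj _ hp
      have hrep : ∀ x : ↥(Tset m (pgl (uD a))),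
          ∃ t : ℂˣ, t ^ m = 1 ∧ (x : PGL2) = pgl (uD t) :=
        fun x => Tset_uD_rep a ha1 (Or.inl hAm) x.2
      choose t ht1 ht2 using hrep
      refine ⟨fun x => ⟨((t x : ℂˣ) : ℂ), (mem_nthRootsFinset (by omega) (1 : ℂ)).mpr
        (by rw [← Units.val_pow_eq_pow_val, ht1 x, Units.val_one])⟩, ?_⟩
      intro x y hxy
      have hcc : ((t x : ℂˣ) : ℂ) = ((t y : ℂˣ) : ℂ) := congrArg Subtype.val hxy
      have htu : t x = t y := Units.ext hcc
      apply Subtype.ext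
      rw [ht2 x, ht2 y, htu]

/-- the key inequality: a quandle isomorphism `Conj_m → Conj_n` forces `n ≤ m` -/
lemma key (m n : ℕ) (hm : 1 ≤ m) (hn : 1 ≤ n) (f : PGL2 → PGL2)
    (hbij : Function.Bijective f)
    (hf : ∀ a b : PGL2, f ((b ^ m)⁻¹ * a * b ^ m) = (f b ^ n)⁻¹ * f a * f b ^ n) :
    n ≤ m := by
  classical
  have step1 : ∀ x : PGL2, x ^ m = 1 ↔ (f x) ^ n = 1 := by
    intro x
    constructor
    · intro hx
      apply center_PGL2
      intro w
      obtain ⟨a, rfl⟩ := hbij.2 w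
      have h := hf a x
      rw [hx] at h
      simp only [inv_one, one_mul, mul_one] at h
      calc f x ^ n * f a = f x ^ n * ((f x ^ n)⁻¹ * f a * f x ^ n) := by rw [← h]
        _ = f a * f x ^ n := by group
    · intro hx
      apply center_PGL2
      intro w
      have h := hf w x
      rw [hx] at h
      simp only [inv_one, one_mul, mul_one] at h
      have h2 : (x ^ m)⁻¹ * w * x ^ m = w := hbij.1 h
      calc x ^ m * w = x ^ m * ((x ^ m)⁻¹ * w * x ^ m) := by rw [h2]
        _ = w * x ^ m := by group
  have step2 : ∀ x b : PGL2, (x * b ^ m = b ^ m * x) ↔ (f x * f b ^ n = f b ^ n * f x) := by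
    intro x b
    have e1 : x * b ^ m = b ^ m * x ↔ (b ^ m)⁻¹ * x * b ^ m = x := by
      constructor
      · intro h
        calc (b ^ m)⁻¹ * x * b ^ m = (b ^ m)⁻¹ * (x * b ^ m) := by group
          _ = (b ^ m)⁻¹ * (b ^ m * x) := by rw [h]
          _ = x := by group
      · intro h
        calc x * b ^ m = b ^ m * ((b ^ m)⁻¹ * x * b ^ m) := by group
          _ = b ^ m * x := by rw [h]
    have e2 : f x * f b ^ n = f b ^ n * f x ↔ (f b ^ n)⁻¹ * f x * f b ^ n = f x := by
      constructor
      · intro h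
        calc (f b ^ n)⁻¹ * f x * f b ^ n = (f b ^ n)⁻¹ * (f x * f b ^ n) := by group
          _ = (f b ^ n)⁻¹ * (f b ^ n * f x) := by rw [h]
          _ = f x := by group
      · intro h
        calc f x * f b ^ n = f b ^ n * ((f b ^ n)⁻¹ * f x * f b ^ n) := by group
          _ = f b ^ n * f x := by rw [h]
    rw [e1, e2, ← hbij.1.eq_iff, hf x b]
  set two : ℂˣ := Units.mk0 (2 : ℂ) (by norm_num) with htwo
  have h2cast : ((two ^ n : ℂˣ) : ℂ) = ((2 ^ n : ℕ) : ℂ) := by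
    rw [Units.val_pow_eq_pow_val, htwo]
    push_cast
    rfl
  have h2n1 : ((two ^ n : ℂˣ) : ℂ) ≠ 1 := by
    rw [h2cast]
    intro h
    have h2 : (2 ^ n : ℕ) = 1 := by exact_mod_cast h
    have h3 := Nat.one_lt_two_pow_iff.mpr (show n ≠ 0 by omega)
    rw [h2] at h3
    exact lt_irrefl 1 h3
  have h2nm1 : ((two ^ n : ℂˣ) : ℂ) ≠ -1 := by
    rw [h2cast]
    intro h
    have h2 : ((2 ^ n + 1 : ℕ) : ℂ) = 0 := by push_cast at h ⊢; linear_combination h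
    have h3 : (2 ^ n + 1 : ℕ) = 0 := by exact_mod_cast h2
    exact Nat.succ_ne_zero _ h3
  set b₀ : PGL2 := pgl (uD two) with hb₀
  obtain ⟨b, hb⟩ := hbij.2 b₀
  have hb0n : b₀ ^ n = pgl (uD (two ^ n)) := by
    rw [hb₀, ← pgl_pow, uD_pow]
  have hiff : ∀ x : PGL2, x ∈ Tset m (b ^ m) ↔ f x ∈ Tset n (pgl (uD (two ^ n))) := by
    intro x
    show (x ^ m = 1 ∧ x * b ^ m = b ^ m * x) ↔
      (f x ^ n = 1 ∧ f x * pgl (uD (two ^ n)) = pgl (uD (two ^ n)) * f x)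
    rw [step1 x, step2 x b, hb, hb0n]
  obtain ⟨Ψ, hΨ⟩ := Tset_card hn (two ^ n) h2n1 h2nm1
  let eΨ := Equiv.ofBijective Ψ hΨ
  have hF : Function.Bijective
      (fun x : ↥(Tset m (b ^ m)) =>
        (⟨f (x : PGL2), (hiff (x : PGL2)).mp x.2⟩ : ↥(Tset n (pgl (uD (two ^ n)))))) := by
    constructor
    · intro x y hxy
      apply Subtype.ext
      exact hbij.1 (congrArg Subtype.val hxy)
    · rintro ⟨y, hy⟩
      obtain ⟨x, rfl⟩ := hbij.2 y
      exact ⟨⟨x, (hiff x).mpr hy⟩, rfl⟩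
  let eS := Equiv.ofBijective _ hF
  rcases upper m hm (b ^ m) with hInf | ⟨φ, hφ⟩
  · exfalso
    haveI : Infinite ↥(Tset m (b ^ m)) := Set.infinite_coe_iff.mpr hInf
    haveI : Infinite ↥(Tset n (pgl (uD (two ^ n)))) := Infinite.of_injective _ eS.injective
    haveI : Infinite {t : ℂ // t ∈ nthRootsFinset n (1 : ℂ)} :=
      Infinite.of_injective _ eΨ.symm.injective
    exact not_finite {t : ℂ // t ∈ nthRootsFinset n (1 : ℂ)}
  · have hχ : Function.Injective (φ ∘ eS.symm ∘ eΨ) :=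
      hφ.comp (eS.symm.injective.comp eΨ.injective)
    have hcard := Fintype.card_le_of_injective _ hχ
    have hcn : Fintype.card {t : ℂ // t ∈ nthRootsFinset n (1 : ℂ)} = n := by
      rw [Fintype.card_coe]
      exact (Complex.isPrimitiveRoot_exp n (by omega)).card_nthRootsFinset
    have hcm : Fintype.card {t : ℂ // t ∈ nthRootsFinset m (1 : ℂ)} = m := by
      rw [Fintype.card_coe]
      exact (Complex.isPrimitiveRoot_exp m (by omega)).card_nthRootsFinset
    rw [hcn, hcm] at hcard
    exact hcard

end Aux13

/-- For distinct positive integers `m, n`, the quandles `Conjₘ(PGL(2, ℂ))` and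
`Conjₙ(PGL(2, ℂ))` are not isomorphic: there is no bijection `f` of `PGL(2, ℂ)` with
`f(b⁻ᵐ a bᵐ) = f(b)⁻ⁿ f(a) f(b)ⁿ` for all `a, b`. -/
theorem stmt13 (m n : ℕ) (hm : 1 ≤ m) (hn : 1 ≤ n) (hmn : m ≠ n) :
    ¬∃ f : PGL2 → PGL2, Function.Bijective f ∧
      ∀ a b : PGL2, f ((b ^ m)⁻¹ * a * b ^ m) = (f b ^ n)⁻¹ * f a * f b ^ n := by
  rintro ⟨f, hbij, hf⟩
  have h1 : n ≤ m := key m n hm hn f hbij hf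
  let e := Equiv.ofBijective f hbij
  have he : ∀ y, f (e.symm y) = y := fun y => e.apply_symm_apply y
  have hf' : ∀ a b : PGL2,
      e.symm ((b ^ n)⁻¹ * a * b ^ n) = (e.symm b ^ m)⁻¹ * e.symm a * e.symm b ^ m := by
    intro a b
    apply hbij.1
    rw [he]
    rw [hf (e.symm a) (e.symm b), he, he]
  have h2 : m ≤ n := key n m hn hm e.symm e.symm.bijective hf'
  exact hmn (le_antisymm h2 h1)
end

section
/- Let λ₁, λ₂, λ₁', λ₂' ∈ ℂ be nonzero and let p, q be distinct positive integers. (1) If λ₂/λ₁ is a p-th primitive root of unity and λ₂'/λ₁' is not a root of unity, then the conjugation quandles M_{λ₁,λ₂} and M_{λ₁',λ₂'} are not isomorphic. (2) If λ₂/λ₁ is a p-th primitive root of unity and λ₂'/λ₁' is a q-th primitive root of unity, then M_{λ₁,λ₂} and M_{λ₁',λ₂'} are not isomorphic. -/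
open Matrix

/-- `f` is an isomorphism of conjugation quandles from `S` onto `T`: a bijection of `S`
onto `T` with `f(B⁻¹ A B) = f(B)⁻¹ f(A) f(B)` for all `A, B ∈ S`. -/
def IsConjQuandleIso (S T : Set GL2) (f : GL2 → GL2) : Prop :=
  Set.BijOn f S T ∧ ∀ A ∈ S, ∀ B ∈ S, f (B⁻¹ * A * B) = (f B)⁻¹ * f A * f B

/-- The invariant: every `k`-th power of an element of `S` acts trivially on `S`. -/
def FixAll (S : Set GL2) (k : ℕ) : Prop :=
  ∀ a ∈ S, ∀ x ∈ S, (a ^ k)⁻¹ * x * a ^ k = x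

lemma conjClass_conj {D x : GL2} (hx : x ∈ conjClass D) (Q : GL2) :
    Q⁻¹ * x * Q ∈ conjClass D := by
  obtain ⟨P, rfl⟩ := hx
  exact ⟨P * Q, by group⟩

lemma self_mem_conjClass (D : GL2) : D ∈ conjClass D := ⟨1, by group⟩

lemma conj_pow_eq (P A : GL2) (k : ℕ) : (P⁻¹ * A * P) ^ k = P⁻¹ * A ^ k * P := by
  induction k with
  | zero => simp
  | succ n ih => rw [pow_succ, pow_succ, ih]; group

lemma iso_pow {D D' : GL2} {f : GL2 → GL2}
    (hf : IsConjQuandleIso (conjClass D) (conjClass D') f) :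
    ∀ (k : ℕ), ∀ a ∈ conjClass D, ∀ x ∈ conjClass D,
      f ((a ^ k)⁻¹ * x * a ^ k) = (f a ^ k)⁻¹ * f x * f a ^ k := by
  intro k
  induction k with
  | zero => intro a _ x _; simp
  | succ n ih =>
    intro a ha x hx
    have e : (a ^ (n + 1))⁻¹ * x * a ^ (n + 1) = a⁻¹ * ((a ^ n)⁻¹ * x * a ^ n) * a := by
      rw [pow_succ]; group
    have hmem : (a ^ n)⁻¹ * x * a ^ n ∈ conjClass D := conjClass_conj hx _
    rw [e, hf.2 _ hmem a ha, ih a ha x hx, pow_succ]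
    group

lemma conjClass_pow_conj {D : GL2} {x : GL2} (hx : x ∈ conjClass D) (a : GL2) (k : ℕ) :
    (a ^ k)⁻¹ * x * a ^ k ∈ conjClass D := conjClass_conj hx (a ^ k)

lemma fix_transport {D D' : GL2} {f : GL2 → GL2}
    (hf : IsConjQuandleIso (conjClass D) (conjClass D') f) (k : ℕ) :
    FixAll (conjClass D) k ↔ FixAll (conjClass D') k := by
  obtain ⟨hbij, hcond⟩ := hf
  constructor
  · intro hfix b hb y hy
    obtain ⟨a, ha, rfl⟩ := hbij.surjOn hb
    obtain ⟨x, hx, rfl⟩ := hbij.surjOn hy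
    rw [← iso_pow ⟨hbij, hcond⟩ k a ha x hx, hfix a ha x hx]
  · intro hfix a ha x hx
    have h1 : f ((a ^ k)⁻¹ * x * a ^ k) = f x := by
      rw [iso_pow ⟨hbij, hcond⟩ k a ha x hx]
      exact hfix (f a) (hbij.mapsTo ha) (f x) (hbij.mapsTo hx)
    exact hbij.injOn (conjClass_pow_conj hx a k) hx h1

/-- The key computation: for `D` conjugate to `diag(l1, l2)`, the `k`-th powers act
trivially on the conjugacy class iff `(l2/l1)^k = 1`. -/
lemma fix_iff {l1 l2 : ℂ} (h1 : l1 ≠ 0) (h2 : l2 ≠ 0) (D : GL2)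
    (hD : (D : Matrix (Fin 2) (Fin 2) ℂ) = Matrix.diagonal ![l1, l2]) (k : ℕ) :
    FixAll (conjClass D) k ↔ (l2 / l1) ^ k = 1 := by
  constructor
  · intro hfix
    by_cases hl : l2 = l1
    · simp [hl, div_self h1]
    -- witness: x = Q * D * Q⁻¹ with Q unipotent
    · set Qu : GL2 := ⟨!![1, 1; 0, 1], !![1, -1; 0, 1], by
        ext i j; fin_cases i <;> fin_cases j <;>
          simp [Matrix.mul_apply, Fin.sum_univ_two], by
        ext i j; fin_cases i <;> fin_cases j <;>
          simp [Matrix.mul_apply, Fin.sum_univ_two]⟩ with hQu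
      set x : GL2 := Qu * D * Qu⁻¹ with hx
      have hxmem : x ∈ conjClass D := ⟨Qu⁻¹, by rw [hx]; group⟩
      have h := hfix D (self_mem_conjClass D) x hxmem
      have hc : x * D ^ k = D ^ k * x := by
        have h2' := congrArg (fun z => D ^ k * z) h
        simpa [mul_assoc] using h2'
      have hmat : (x : Matrix (Fin 2) (Fin 2) ℂ) * (D : Matrix (Fin 2) (Fin 2) ℂ) ^ k
          = (D : Matrix (Fin 2) (Fin 2) ℂ) ^ k * (x : Matrix (Fin 2) (Fin 2) ℂ) := by
        have := congrArg Units.val hc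
        simpa [Units.val_mul] using this
      have hx01 : (x : Matrix (Fin 2) (Fin 2) ℂ) 0 1 = l2 - l1 := by
        have hxv : (x : Matrix (Fin 2) (Fin 2) ℂ)
            = !![1, 1; 0, 1] * Matrix.diagonal ![l1, l2] * !![1, -1; 0, 1] := by
          rw [hx, Units.val_mul, Units.val_mul, hD]
          rfl
        have h1p : (!![1, 1; 0, 1] * Matrix.diagonal ![l1, l2]
            : Matrix (Fin 2) (Fin 2) ℂ) = !![l1, l2; 0, l2] := by
          ext i j
          rw [Matrix.mul_diagonal]
          fin_cases i <;> fin_cases j <;> simp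
        have hprod : (!![1, 1; 0, 1] * Matrix.diagonal ![l1, l2] * !![1, -1; 0, 1]
            : Matrix (Fin 2) (Fin 2) ℂ) = !![l1, l2 - l1; 0, l2] := by
          rw [h1p]
          ext i j
          fin_cases i <;> fin_cases j <;>
            simp [Matrix.mul_apply, Fin.sum_univ_two] <;> ring
        rw [hxv, hprod]
        simp
      have hentry := congrFun (congrFun hmat 0) 1
      rw [hD, Matrix.diagonal_pow] at hentry
      rw [Matrix.mul_diagonal, Matrix.diagonal_mul] at hentry
      simp only [Pi.pow_apply, Matrix.cons_val_one, Matrix.cons_val_zero,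
        Matrix.head_cons, hx01] at hentry
      -- hentry : (l2 - l1) * l2 ^ k = l1 ^ k * (l2 - l1)
      have hne : l2 - l1 ≠ 0 := sub_ne_zero.mpr hl
      have : l2 ^ k = l1 ^ k := by
        have := hentry.trans (mul_comm (l1 ^ k) (l2 - l1))
        exact mul_left_cancel₀ hne this
      rw [div_pow, this, div_self (pow_ne_zero k h1)]
  · intro hpow a ha x hx
    have hl : l2 ^ k = l1 ^ k := by
      rw [div_pow, div_eq_one_iff_eq (pow_ne_zero k h1)] at hpow
      exact hpow
    -- D^k is central
    have hDk : ∀ g : GL2, D ^ k * g = g * D ^ k := by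
      intro g
      apply Units.ext
      rw [Units.val_mul, Units.val_mul, Units.val_pow_eq_pow_val, hD,
        Matrix.diagonal_pow]
      have hconst : (![l1, l2] : Fin 2 → ℂ) ^ k = fun _ => l1 ^ k := by
        funext i
        fin_cases i <;> simp [hl]
      rw [hconst]
      ext i j
      simp [Matrix.mul_diagonal, Matrix.diagonal_mul, mul_comm]
    -- a^k is central too, since a = P⁻¹ D P
    obtain ⟨P, rfl⟩ := ha
    have hak : (P⁻¹ * D * P) ^ k = P⁻¹ * D ^ k * P := conj_pow_eq P D k
    have hcentral : ∀ g : GL2, (P⁻¹ * D * P) ^ k * g = g * (P⁻¹ * D * P) ^ k := by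
      intro g
      rw [hak]
      have : P⁻¹ * D ^ k * P = D ^ k := by
        rw [← hDk P⁻¹]; group
      rw [this, hDk]
    rw [mul_assoc, ← hcentral x, inv_mul_cancel_left]

/-- Let `λ₁, λ₂, λ₁', λ₂'` be nonzero and `p ≠ q` positive integers.
(1) If `λ₂/λ₁` is a `p`-th primitive root of unity and `λ₂'/λ₁'` is not a root of unity,
then the conjugation quandles `M_{λ₁,λ₂}` and `M_{λ₁',λ₂'}` are not isomorphic.
(2) If `λ₂/λ₁` is a `p`-th primitive root of unity and `λ₂'/λ₁'` is a `q`-th primitive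
root of unity, then `M_{λ₁,λ₂}` and `M_{λ₁',λ₂'}` are not isomorphic. -/
theorem stmt15 (l1 l2 l1' l2' : ℂ) (h1 : l1 ≠ 0) (h2 : l2 ≠ 0)
    (h1' : l1' ≠ 0) (h2' : l2' ≠ 0) (p q : ℕ) (hp : 1 ≤ p) (hq : 1 ≤ q) (hpq : p ≠ q)
    (D D' : GL2) (hD : (D : Matrix (Fin 2) (Fin 2) ℂ) = Matrix.diagonal ![l1, l2])
    (hD' : (D' : Matrix (Fin 2) (Fin 2) ℂ) = Matrix.diagonal ![l1', l2']) :
    ((IsPrimitiveRoot (l2 / l1) p ∧ (∀ k : ℕ, 1 ≤ k → (l2' / l1') ^ k ≠ 1)) →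
      ¬∃ f : GL2 → GL2, IsConjQuandleIso (conjClass D) (conjClass D') f) ∧
    ((IsPrimitiveRoot (l2 / l1) p ∧ IsPrimitiveRoot (l2' / l1') q) →
      ¬∃ f : GL2 → GL2, IsConjQuandleIso (conjClass D) (conjClass D') f) := by
  constructor
  · rintro ⟨hprim, hnr⟩ ⟨f, hf⟩
    have hS : FixAll (conjClass D) p := (fix_iff h1 h2 D hD p).mpr hprim.pow_eq_one
    have hT : FixAll (conjClass D') p := (fix_transport hf p).mp hS
    exact hnr p hp ((fix_iff h1' h2' D' hD' p).mp hT)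
  · rintro ⟨hprim, hprim'⟩ ⟨f, hf⟩
    have key : ∀ k : ℕ, (l2 / l1) ^ k = 1 ↔ (l2' / l1') ^ k = 1 := by
      intro k
      rw [← fix_iff h1 h2 D hD k, ← fix_iff h1' h2' D' hD' k]
      exact fix_transport hf k
    have hqp : q ∣ p := hprim'.dvd_of_pow_eq_one p ((key p).mp hprim.pow_eq_one)
    have hpq' : p ∣ q := hprim.dvd_of_pow_eq_one q ((key q).mpr hprim'.pow_eq_one)
    exact hpq (Nat.dvd_antisymm hpq' hqp)
end

section
/- Let λ₁, λ₂, λ₁', λ₂' ∈ ℂ be nonzero such that λ₂/λ₁ is not a root of unity. If the conjugation quandles M_{λ₁,λ₂} and M_{λ₁',λ₂'} are isomorphic, then for every positive integer n the conjugation quandles M_{λ₁ⁿ,λ₂ⁿ} and M_{λ₁'ⁿ,λ₂'ⁿ} are isomorphic. -/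
open Matrix

section AuxLemmas

private lemma aux_commDiag {a b : ℂ} (hab : a ≠ b) {M : Matrix (Fin 2) (Fin 2) ℂ}
    (h : M * Matrix.diagonal ![a,b] = Matrix.diagonal ![a,b] * M) :
    M 0 1 = 0 ∧ M 1 0 = 0 := by
  have h01 := congrFun (congrFun h 0) 1
  have h10 := congrFun (congrFun h 1) 0
  simp [Matrix.mul_apply, Fin.sum_univ_two, Matrix.diagonal] at h01 h10
  have e01 : M 0 1 * (b - a) = 0 := by linear_combination h01
  have e10 : M 1 0 * (a - b) = 0 := by linear_combination h10
  have hba : b - a ≠ 0 := sub_ne_zero.mpr (Ne.symm hab)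
  have hab' : a - b ≠ 0 := sub_ne_zero.mpr hab
  exact ⟨(mul_eq_zero.mp e01).resolve_right hba, (mul_eq_zero.mp e10).resolve_right hab'⟩

private lemma aux_offdiag_comm {M : Matrix (Fin 2) (Fin 2) ℂ} (h01 : M 0 1 = 0)
    (h10 : M 1 0 = 0) (c d : ℂ) :
    M * Matrix.diagonal ![c,d] = Matrix.diagonal ![c,d] * M := by
  ext i j
  fin_cases i <;> fin_cases j <;>
    simp [Matrix.mul_apply, Fin.sum_univ_two, Matrix.diagonal, h01, h10, mul_comm]

private lemma aux_vecpow (a b : ℂ) (n : ℕ) : (![a,b]) ^ n = ![a^n, b^n] := by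
  funext i; fin_cases i <;> simp [Pi.pow_apply]

private lemma aux_conjpow {G : Type*} [Group G] (a b : G) (n : ℕ) :
    (a⁻¹ * b * a)^n = a⁻¹ * b^n * a := by
  simpa using conj_pow (a := a⁻¹) (b := b) (i := n)

private lemma aux_self_mem (E : GL2) : E ∈ conjClass E := ⟨1, by group⟩

private lemma aux_conj_mem {E A : GL2} (hA : A ∈ conjClass E) (B : GL2) :
    B⁻¹ * A * B ∈ conjClass E := by
  obtain ⟨P, rfl⟩ := hA; exact ⟨P * B, by group⟩

/-- the `n`-th power of a class rep, as a unit. -/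
private lemma aux_pow_val {a b : ℂ} {E : GL2}
    (hE : (E : Matrix (Fin 2) (Fin 2) ℂ) = Matrix.diagonal ![a,b]) (n : ℕ) :
    ((E^n : GL2) : Matrix (Fin 2) (Fin 2) ℂ) = Matrix.diagonal ![a^n, b^n] := by
  have : ((E^n : GL2) : Matrix (Fin 2) (Fin 2) ℂ)
      = ((E : Matrix (Fin 2) (Fin 2) ℂ))^n := rfl
  rw [this, hE, ← aux_vecpow a b n]
  exact Matrix.diagonal_pow ![a,b] n

private lemma aux_pow_eq {a b : ℂ} {E En : GL2} {n : ℕ}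
    (hE : (E : Matrix (Fin 2) (Fin 2) ℂ) = Matrix.diagonal ![a,b])
    (hEn : (En : Matrix (Fin 2) (Fin 2) ℂ) = Matrix.diagonal ![a^n,b^n]) :
    E^n = En :=
  Units.ext (by rw [aux_pow_val hE, hEn])

private lemma aux_pow_mem {E En A : GL2} {n : ℕ} (hEn : E^n = En)
    (hA : A ∈ conjClass E) : A^n ∈ conjClass En := by
  obtain ⟨P, rfl⟩ := hA
  exact ⟨P, by rw [aux_conjpow, hEn]⟩

private lemma aux_pow_root {E En X : GL2} {n : ℕ} (hEn : E^n = En)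
    (hX : X ∈ conjClass En) : ∃ W ∈ conjClass E, W^n = X := by
  obtain ⟨P, rfl⟩ := hX
  exact ⟨P⁻¹ * E * P, ⟨P, rfl⟩, by rw [aux_conjpow, hEn]⟩

private lemma aux_pow_injOn {a b : ℂ} {n : ℕ} (h : a^n ≠ b^n) {E : GL2}
    (hE : (E : Matrix (Fin 2) (Fin 2) ℂ) = Matrix.diagonal ![a,b]) :
    Set.InjOn (·^n) (conjClass E) := by
  rintro X ⟨P, rfl⟩ Y ⟨Q, rfl⟩ hXY
  simp only [aux_conjpow] at hXY
  have hR : (P * Q⁻¹) * E^n = E^n * (P * Q⁻¹) := by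
    calc (P * Q⁻¹) * E^n = P * (Q⁻¹ * E^n * Q) * Q⁻¹ := by group
    _ = P * (P⁻¹ * E^n * P) * Q⁻¹ := by rw [hXY]
    _ = E^n * (P * Q⁻¹) := by group
  have hRval : ((P * Q⁻¹ : GL2) : Matrix (Fin 2) (Fin 2) ℂ) * Matrix.diagonal ![a^n,b^n]
      = Matrix.diagonal ![a^n,b^n] * ((P * Q⁻¹ : GL2) : Matrix (Fin 2) (Fin 2) ℂ) := by
    have := congrArg Units.val hR
    rwa [Units.val_mul (P * Q⁻¹) (E^n), Units.val_mul (E^n) (P * Q⁻¹),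
      aux_pow_val hE] at this
  obtain ⟨h01, h10⟩ := aux_commDiag h hRval
  have hcE : (P * Q⁻¹) * E = E * (P * Q⁻¹) := by
    apply Units.ext
    rw [Units.val_mul (P * Q⁻¹) E, Units.val_mul E (P * Q⁻¹), hE]
    exact aux_offdiag_comm h01 h10 a b
  calc P⁻¹ * E * P = P⁻¹ * (E * (P * Q⁻¹)) * Q := by group
  _ = P⁻¹ * ((P * Q⁻¹) * E) * Q := by rw [hcE]
  _ = Q⁻¹ * E * Q := by group

private lemma aux_central {c : ℂ} {Z : GL2}
    (hZ : (Z : Matrix (Fin 2) (Fin 2) ℂ) = c • (1 : Matrix (Fin 2) (Fin 2) ℂ)) :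
    ∀ U : GL2, Z * U = U * Z := by
  intro U
  apply Units.ext
  rw [Units.val_mul, Units.val_mul, hZ, smul_mul_assoc, mul_smul_comm, one_mul, mul_one]

private lemma aux_const_diag (c : ℂ) :
    Matrix.diagonal ![c,c] = c • (1 : Matrix (Fin 2) (Fin 2) ℂ) := by
  ext i j; fin_cases i <;> fin_cases j <;> simp [Matrix.diagonal, Matrix.one_apply]

/-- An explicit non-diagonal conjugator. -/
private def P0 : GL2 :=
  ⟨!![1,1;0,1], !![1,-1;0,1],
   by ext i j; fin_cases i <;> fin_cases j <;>
        simp [Matrix.mul_apply, Fin.sum_univ_two, Matrix.one_apply],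
   by ext i j; fin_cases i <;> fin_cases j <;>
        simp [Matrix.mul_apply, Fin.sum_univ_two, Matrix.one_apply]⟩

private lemma aux_P0_entry (l1 l2 : ℂ) {D : GL2}
    (hD : (D : Matrix (Fin 2) (Fin 2) ℂ) = Matrix.diagonal ![l1, l2]) :
    ((P0⁻¹ * D * P0 : GL2) : Matrix (Fin 2) (Fin 2) ℂ) 0 1 = l1 - l2 := by
  have hv : ((P0⁻¹ * D * P0 : GL2) : Matrix (Fin 2) (Fin 2) ℂ)
      = (!![1,-1;0,1] : Matrix (Fin 2) (Fin 2) ℂ) * Matrix.diagonal ![l1,l2] *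
        (!![1,1;0,1] : Matrix (Fin 2) (Fin 2) ℂ) := by
    rw [Units.val_mul, Units.val_mul, hD]; rfl
  rw [hv]
  simp [Matrix.mul_apply, Matrix.mul_diagonal, Fin.sum_univ_two, Matrix.vecMul_diagonal]
  ring

end AuxLemmas
/-- Let `λ₁, λ₂, λ₁', λ₂'` be nonzero with `λ₂/λ₁` not a root of unity. If the conjugation
quandles `M_{λ₁,λ₂}` and `M_{λ₁',λ₂'}` are isomorphic, then for every positive integer `n`
the conjugation quandles `M_{λ₁ⁿ,λ₂ⁿ}` and `M_{λ₁'ⁿ,λ₂'ⁿ}` are isomorphic. -/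
theorem stmt16 (l1 l2 l1' l2' : ℂ) (h1 : l1 ≠ 0) (h2 : l2 ≠ 0)
    (h1' : l1' ≠ 0) (h2' : l2' ≠ 0)
    (hroot : ∀ k : ℕ, 1 ≤ k → (l2 / l1) ^ k ≠ 1)
    (D D' : GL2) (hD : (D : Matrix (Fin 2) (Fin 2) ℂ) = Matrix.diagonal ![l1, l2])
    (hD' : (D' : Matrix (Fin 2) (Fin 2) ℂ) = Matrix.diagonal ![l1', l2'])
    (hiso : ∃ f : GL2 → GL2, IsConjQuandleIso (conjClass D) (conjClass D') f) :
    ∀ n : ℕ, 1 ≤ n → ∀ Dn Dn' : GL2,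
      (Dn : Matrix (Fin 2) (Fin 2) ℂ) = Matrix.diagonal ![l1 ^ n, l2 ^ n] →
      (Dn' : Matrix (Fin 2) (Fin 2) ℂ) = Matrix.diagonal ![l1' ^ n, l2' ^ n] →
      ∃ f : GL2 → GL2, IsConjQuandleIso (conjClass Dn) (conjClass Dn') f := by
  obtain ⟨f, hbij, hf⟩ := hiso
  set S := conjClass D with hS
  set T := conjClass D' with hT
  -- powers of l1, l2 stay distinct
  have hpowne : ∀ k : ℕ, 1 ≤ k → l1 ^ k ≠ l2 ^ k := by
    intro k hk he
    exact hroot k hk (by rw [div_pow, ← he, div_self (pow_ne_zero k h1)])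
  -- iterated quandle morphism property
  have hiter : ∀ k : ℕ, ∀ A ∈ S, ∀ B ∈ S,
      f ((B^k)⁻¹ * A * B^k) = ((f B)^k)⁻¹ * f A * (f B)^k := by
    intro k
    induction k with
    | zero => intro A hA B hB; simp
    | succ k ih =>
      intro A hA B hB
      have hstep : (B^(k+1))⁻¹ * A * B^(k+1) = B⁻¹ * ((B^k)⁻¹ * A * B^k) * B := by
        rw [pow_succ]; group
      rw [hstep, hf _ (aux_conj_mem hA (B^k)) _ hB, ih A hA B hB, pow_succ]
      group
  -- l2'/l1' is not a root of unity either
  have hroot' : ∀ k : ℕ, 1 ≤ k → (l2' / l1') ^ k ≠ 1 := by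
    intro k hk hcon
    have hlk : l2' ^ k = l1' ^ k := by
      rw [div_pow, div_eq_one_iff_eq (pow_ne_zero k h1')] at hcon
      exact hcon
    -- D'^k is central
    have hDk : ((D'^k : GL2) : Matrix (Fin 2) (Fin 2) ℂ)
        = (l1'^k) • (1 : Matrix (Fin 2) (Fin 2) ℂ) := by
      rw [aux_pow_val hD' k, hlk, aux_const_diag]
    have hcent := aux_central hDk
    -- every element of T has central k-th power
    have hTk : ∀ C ∈ T, ∀ U : GL2, C^k * U = U * C^k := by
      rintro C ⟨P, rfl⟩ U
      have hCk : (P⁻¹ * D' * P)^k = D'^k := by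
        rw [aux_conjpow, ← hcent P⁻¹]; group
      rw [hCk]; exact hcent U
    -- hence conjugation by B^k fixes all of S
    have hfix : ∀ A ∈ S, ∀ B ∈ S, (B^k)⁻¹ * A * B^k = A := by
      intro A hA B hB
      apply hbij.injOn (aux_conj_mem hA (B^k)) hA
      rw [hiter k A hA B hB]
      have hc := hTk (f B) (hbij.mapsTo hB) (f A)
      rw [mul_assoc, ← hc]
      group
    -- but P0⁻¹ D P0 does not commute with D^k
    set A0 : GL2 := P0⁻¹ * D * P0 with hA0
    have hA0S : A0 ∈ S := ⟨P0, rfl⟩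
    have hcomm := hfix A0 hA0S D (aux_self_mem D)
    have hmul : D^k * ((D^k)⁻¹ * A0 * D^k) = D^k * A0 := by rw [hcomm]
    have h3 : A0 * D^k = D^k * A0 := by rw [← hmul]; group
    have h3v : ((A0 : GL2) : Matrix (Fin 2) (Fin 2) ℂ) * Matrix.diagonal ![l1^k, l2^k]
        = Matrix.diagonal ![l1^k, l2^k] * ((A0 : GL2) : Matrix (Fin 2) (Fin 2) ℂ) := by
      have := congrArg Units.val h3
      rwa [Units.val_mul A0 (D^k), Units.val_mul (D^k) A0, aux_pow_val hD k] at this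
    obtain ⟨h01, _⟩ := aux_commDiag (hpowne k hk) h3v
    rw [aux_P0_entry l1 l2 hD] at h01
    have : l1 = l2 := sub_eq_zero.mp h01
    exact hpowne 1 le_rfl (by rw [pow_one, pow_one, this])
  -- main construction
  intro n hn Dn Dn' hDn hDn'
  have hEn : D^n = Dn := aux_pow_eq hD hDn
  have hEn' : D'^n = Dn' := aux_pow_eq hD' hDn'
  have hinjS : Set.InjOn (·^n) S := aux_pow_injOn (hpowne n hn) hD
  have hpowne' : l1'^n ≠ l2'^n := by
    intro he
    exact hroot' n hn (by rw [div_pow, ← he, div_self (pow_ne_zero n h1')])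
  have hinjT : Set.InjOn (·^n) T := aux_pow_injOn hpowne' hD'
  set σ : GL2 → GL2 := Function.invFunOn (·^n) S with hσ
  have hσmem : ∀ X ∈ conjClass Dn, σ X ∈ S := by
    intro X hX
    obtain ⟨W, hW, hWp⟩ := aux_pow_root hEn hX
    exact Function.invFunOn_mem (f := (·^n)) (s := S) ⟨W, hW, hWp⟩
  have hσpow : ∀ X ∈ conjClass Dn, (σ X)^n = X := by
    intro X hX
    obtain ⟨W, hW, hWp⟩ := aux_pow_root hEn hX
    exact Function.invFunOn_eq (f := (·^n)) (s := S) ⟨W, hW, hWp⟩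
  refine ⟨fun X => (f (σ X))^n, ⟨⟨?_, ?_, ?_⟩, ?_⟩⟩
  · -- MapsTo
    intro X hX
    exact aux_pow_mem hEn' (hbij.mapsTo (hσmem X hX))
  · -- InjOn
    intro X hX Y hY hXY
    have h1'' : f (σ X) = f (σ Y) :=
      hinjT (hbij.mapsTo (hσmem X hX)) (hbij.mapsTo (hσmem Y hY)) hXY
    have h2'' : σ X = σ Y := hbij.injOn (hσmem X hX) (hσmem Y hY) h1''
    rw [← hσpow X hX, ← hσpow Y hY, h2'']
  · -- SurjOn
    intro Y hY
    obtain ⟨Z, hZ, hZp⟩ := aux_pow_root hEn' hY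
    obtain ⟨W, hW, hWf⟩ := hbij.surjOn hZ
    refine ⟨W^n, aux_pow_mem hEn hW, ?_⟩
    have hWn : W^n ∈ conjClass Dn := aux_pow_mem hEn hW
    have hσW : σ (W^n) = W := hinjS (hσmem _ hWn) hW
      (by show (σ (W^n))^n = W^n; rw [hσpow _ hWn])
    simp only [hσW, hWf, hZp]
  · -- quandle morphism
    intro A hA B hB
    set a := σ A with ha
    set b := σ B with hb
    have haS : a ∈ S := hσmem A hA
    have hbS : b ∈ S := hσmem B hB
    have hap : a^n = A := hσpow A hA
    have hbp : b^n = B := hσpow B hB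
    set c : GL2 := (b^n)⁻¹ * a * b^n with hc
    have hcS : c ∈ S := aux_conj_mem haS (b^n)
    have hBA : B⁻¹ * A * B = c^n := by rw [hc, aux_conjpow, hap, hbp]
    have hBAmem : B⁻¹ * A * B ∈ conjClass Dn := aux_conj_mem hA B
    have hσc : σ (B⁻¹ * A * B) = c :=
      hinjS (hσmem _ hBAmem) hcS
        (by show (σ (B⁻¹ * A * B))^n = c^n; rw [hσpow _ hBAmem, hBA])
    show (f (σ (B⁻¹ * A * B)))^n = ((f (σ B))^n)⁻¹ * (f (σ A))^n * (f (σ B))^n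
    rw [hσc, hc, hiter n a haS b hbS, aux_conjpow, ← ha, ← hb]
end

section
/- Let λ₁, λ₂ ∈ ℂ be nonzero with λ₁ ≠ λ₂ and λ₁ ≠ −λ₂. Then there exist matrices A, B in the conjugacy class M_{λ₁,λ₂} of D(λ₁, λ₂) = diag(λ₁, λ₂) in GL(2, ℂ) such that AB ≠ BA and B⁻¹ A⁻¹ D(λ₁, λ₂) A B = D(λ₁, λ₂). -/
open Matrix

/-- For nonzero `λ₁, λ₂` with `λ₁ ≠ λ₂` and `λ₁ ≠ -λ₂`, there exist non-commuting `A, B`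
in the conjugacy class of `D = diag(λ₁, λ₂)` with `B⁻¹ A⁻¹ D A B = D`. -/
theorem stmt17 (l1 l2 : ℂ) (h1 : l1 ≠ 0) (h2 : l2 ≠ 0) (hne : l1 ≠ l2) (hne' : l1 ≠ -l2)
    (D : GL2) (hD : (D : Matrix (Fin 2) (Fin 2) ℂ) = Matrix.diagonal ![l1, l2]) :
    ∃ A ∈ conjClass D, ∃ B ∈ conjClass D,
      A * B ≠ B * A ∧ B⁻¹ * A⁻¹ * D * A * B = D := by
  have hsub : l2 - l1 ≠ 0 := sub_ne_zero.mpr (Ne.symm hne)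
  have hDm : (D : Matrix (Fin 2) (Fin 2) ℂ) = !![l1, 0; 0, l2] := by
    rw [hD]; ext i j; fin_cases i <;> fin_cases j <;> simp [Matrix.diagonal]
  -- A = !![l1,1;0,l2], B = !![l1,-l2/l1;0,l2]
  have detA : (!![l1, 1; 0, l2]).det ≠ 0 := by simp [Matrix.det_fin_two_of]; exact ⟨h1, h2⟩
  have detB : (!![l1, -l2/l1; 0, l2]).det ≠ 0 := by simp [Matrix.det_fin_two_of]; exact ⟨h1, h2⟩
  set A : GL2 := Matrix.GeneralLinearGroup.mkOfDetNeZero _ detA with hA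
  set B : GL2 := Matrix.GeneralLinearGroup.mkOfDetNeZero _ detB with hB
  have hAm : (A : Matrix (Fin 2) (Fin 2) ℂ) = !![l1, 1; 0, l2] := rfl
  have hBm : (B : Matrix (Fin 2) (Fin 2) ℂ) = !![l1, -l2/l1; 0, l2] := rfl
  -- Q c : unipotent
  have detQ : ∀ c : ℂ, (!![(1:ℂ), c; 0, 1]).det ≠ 0 := by
    intro c; simp [Matrix.det_fin_two_of]
  have conj : ∀ c : ℂ, (Matrix.GeneralLinearGroup.mkOfDetNeZero _ (detQ c)) * D *
      (Matrix.GeneralLinearGroup.mkOfDetNeZero _ (detQ c))⁻¹ =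
      Matrix.GeneralLinearGroup.mkOfDetNeZero (!![l1, c*(l2-l1); 0, l2])
        (by simp [Matrix.det_fin_two_of]; exact ⟨h1, h2⟩) := by
    intro c
    rw [mul_inv_eq_iff_eq_mul]
    apply Units.ext
    show ((Matrix.GeneralLinearGroup.mkOfDetNeZero _ (detQ c) : GL2) : Matrix (Fin 2) (Fin 2) ℂ) * D
      = _
    show (!![(1:ℂ), c; 0, 1]) * (D : Matrix (Fin 2) (Fin 2) ℂ)
      = !![l1, c*(l2-l1); 0, l2] * !![(1:ℂ), c; 0, 1]
    rw [hDm]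
    ext i j; fin_cases i <;> fin_cases j <;> simp [Matrix.mul_apply, Fin.sum_univ_two] <;> ring
  -- membership
  have memconj : ∀ c : ℂ, (Matrix.GeneralLinearGroup.mkOfDetNeZero (!![l1, c*(l2-l1); 0, l2])
      (by simp [Matrix.det_fin_two_of]; exact ⟨h1, h2⟩) : GL2) ∈ conjClass D := by
    intro c
    refine ⟨(Matrix.GeneralLinearGroup.mkOfDetNeZero _ (detQ c))⁻¹, ?_⟩
    rw [inv_inv, ← conj c, mul_assoc]
  have hAeq : A = Matrix.GeneralLinearGroup.mkOfDetNeZero (!![l1, (1/(l2-l1))*(l2-l1); 0, l2])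
      (by simp [Matrix.det_fin_two_of]; exact ⟨h1, h2⟩) := by
    apply Units.ext
    show (!![l1, 1; 0, l2]) = !![l1, (1/(l2-l1))*(l2-l1); 0, l2]
    rw [one_div, inv_mul_cancel₀ hsub]
  have hBeq : B = Matrix.GeneralLinearGroup.mkOfDetNeZero (!![l1, ((-l2/l1)/(l2-l1))*(l2-l1); 0, l2])
      (by simp [Matrix.det_fin_two_of]; exact ⟨h1, h2⟩) := by
    apply Units.ext
    show (!![l1, -l2/l1; 0, l2]) = !![l1, ((-l2/l1)/(l2-l1))*(l2-l1); 0, l2]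
    rw [div_mul_cancel₀ _ hsub]
  refine ⟨A, by rw [hAeq]; exact memconj _, B, by rw [hBeq]; exact memconj _, ?_, ?_⟩
  · intro h
    have h01 := congrArg (fun X : GL2 => (X : Matrix (Fin 2) (Fin 2) ℂ) 0 1) h
    simp only [Units.val_mul, hAm, hBm] at h01
    rw [Matrix.mul_apply, Fin.sum_univ_two] at h01
    rw [Matrix.mul_apply, Fin.sum_univ_two] at h01
    simp at h01
    -- h01 : l1 * (-l2/l1) + l2 = l1 + (-l2/l1)*l2  (roughly)
    field_simp at h01
    -- derive contradiction
    have hz : (l1 - l2) * (l1 + l2) = 0 := by linear_combination -h01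
    rcases mul_eq_zero.mp hz with h' | h'
    · exact hne (sub_eq_zero.mp h')
    · exact hne' (eq_neg_of_add_eq_zero_left h')
  · have hABm : ((A * B : GL2) : Matrix (Fin 2) (Fin 2) ℂ) = !![l1*l1, 0; 0, l2*l2] := by
      rw [Units.val_mul, hAm, hBm]
      ext i j; fin_cases i <;> fin_cases j <;>
        simp [Matrix.mul_apply, Fin.sum_univ_two] <;> field_simp <;> ring
    have key : D * (A * B) = (A * B) * D := by
      apply Units.ext
      simp only [Units.val_mul] at hABm ⊢
      rw [hABm, hDm]
      ext i j; fin_cases i <;> fin_cases j <;>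
        simp [Matrix.mul_apply, Fin.sum_univ_two] <;> ring
    calc B⁻¹ * A⁻¹ * D * A * B = (A*B)⁻¹ * (D * (A*B)) := by
          rw [_root_.mul_inv_rev]; group
      _ = (A*B)⁻¹ * ((A*B) * D) := by rw [key]
      _ = D := by group
end

section
/- The dihedral quandle R₃ of order 3 is not a subquandle of M_{λ₁,λ₂} for any nonzero λ₁, λ₂ ∈ ℂ with λ₁ ≠ λ₂ and λ₁ ≠ −λ₂, and is not a subquandle of M_λ for any nonzero λ ∈ ℂ; that is, there is no injective map f : ℤ/3 → M_{λ₁,λ₂} (respectively f : ℤ/3 → M_λ) satisfying f(2j − i) = f(j)⁻¹ f(i) f(j) for all i, j ∈ ℤ/3. -/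
open Matrix

/-- If commuting with `D ^ 2` (at the matrix level) implies commuting with `D`, then
any element commuting with `B ^ 2`, where `B` is conjugate to `D`, commutes with `B`. -/
lemma comm_lift (D : GL2)
    (hstep : ∀ M : Matrix (Fin 2) (Fin 2) ℂ,
      M * ((D : Matrix (Fin 2) (Fin 2) ℂ))^2 = ((D : Matrix (Fin 2) (Fin 2) ℂ))^2 * M →
      M * D = (D : Matrix (Fin 2) (Fin 2) ℂ) * M)
    (A B : GL2) (hB : B ∈ conjClass D) (hc : A * B^2 = B^2 * A) : A * B = B * A := by
  obtain ⟨P, rfl⟩ := hB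
  have hsq : (P⁻¹*D*P)^2 = P⁻¹*D^2*P := by simp only [sq]; group
  rw [hsq] at hc
  have h1 : (P * A * P⁻¹) * D^2 = D^2 * (P * A * P⁻¹) := by
    calc (P * A * P⁻¹) * D^2 = P * (A * (P⁻¹*D^2*P)) * P⁻¹ := by group
    _ = P * ((P⁻¹*D^2*P) * A) * P⁻¹ := by rw [hc]
    _ = D^2 * (P * A * P⁻¹) := by group
  have h2 : ((P * A * P⁻¹ : GL2) : Matrix (Fin 2) (Fin 2) ℂ) * (D : Matrix (Fin 2) (Fin 2) ℂ)^2
      = (D : Matrix (Fin 2) (Fin 2) ℂ)^2 * ((P * A * P⁻¹ : GL2) : Matrix (Fin 2) (Fin 2) ℂ) := by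
    have := congrArg (Units.val) h1
    simpa using this
  have h3 := hstep _ h2
  have h4 : (P * A * P⁻¹) * D = D * (P * A * P⁻¹) := by
    ext1
    simpa using h3
  calc A * (P⁻¹*D*P) = P⁻¹ * ((P * A * P⁻¹) * D) * P := by group
  _ = P⁻¹ * (D * (P * A * P⁻¹)) * P := by rw [h4]
  _ = (P⁻¹*D*P) * A := by group

lemma step_diag (l1 l2 : ℂ) (h : l1^2 ≠ l2^2) (M : Matrix (Fin 2) (Fin 2) ℂ)
    (hc : M * (!![l1,0;0,l2])^2 = (!![l1,0;0,l2])^2 * M) :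
    M * !![l1,0;0,l2] = !![l1,0;0,l2] * M := by
  rw [sq] at hc
  have e01 := congrFun (congrFun hc 0) 1
  have e10 := congrFun (congrFun hc 1) 0
  simp [Matrix.mul_apply, Fin.sum_univ_two] at e01 e10
  have hsub : l2 * l2 - l1 * l1 ≠ 0 := by
    intro h'; apply h; rw [sub_eq_zero] at h'; rw [sq, sq, h']
  have h01 : M 0 1 = 0 := by
    have : (l2 * l2 - l1 * l1) * M 0 1 = 0 := by linear_combination e01
    rcases mul_eq_zero.mp this with h' | h'
    · exact absurd h' hsub
    · exact h'
  have h10 : M 1 0 = 0 := by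
    have : (l2 * l2 - l1 * l1) * M 1 0 = 0 := by linear_combination -e10
    rcases mul_eq_zero.mp this with h' | h'
    · exact absurd h' hsub
    · exact h'
  ext i j
  fin_cases i <;> fin_cases j <;>
    simp [Matrix.mul_apply, Fin.sum_univ_two, h01, h10] <;> ring

lemma step_jordan (l : ℂ) (hl : l ≠ 0) (M : Matrix (Fin 2) (Fin 2) ℂ)
    (hc : M * (!![l,1;0,l])^2 = (!![l,1;0,l])^2 * M) :
    M * !![l,1;0,l] = !![l,1;0,l] * M := by
  rw [sq] at hc
  have e00 := congrFun (congrFun hc 0) 0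
  have e01 := congrFun (congrFun hc 0) 1
  simp [Matrix.mul_apply, Fin.sum_univ_two] at e00 e01
  have h10 : M 1 0 = 0 := by
    have h2 : (2 * l) * M 1 0 = 0 := by linear_combination -e00
    rcases mul_eq_zero.mp h2 with h' | h'
    · exact absurd h' (by simpa using hl)
    · exact h'
  have h00 : M 0 0 = M 1 1 := by
    have h2 : (2 * l) * (M 0 0 - M 1 1) = 0 := by linear_combination e01
    rcases mul_eq_zero.mp h2 with h' | h'
    · exact absurd h' (by simpa using hl)
    · exact sub_eq_zero.mp h'
  ext i j
  fin_cases i <;> fin_cases j <;>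
    simp [Matrix.mul_apply, Fin.sum_univ_two, h10, h00] <;> ring

lemma diag_eq (l1 l2 : ℂ) : diagonal ![l1,l2] = !![l1,0;0,l2] := by
  ext i j; fin_cases i <;> fin_cases j <;> simp [diagonal]

/-- Given an `R₃`-like family `f` into the conjugacy class of `D`, where commuting with
`D ^ 2` implies commuting with `D`, we get a contradiction with injectivity. -/
lemma no_embed (D : GL2)
    (hstep : ∀ M : Matrix (Fin 2) (Fin 2) ℂ,
      M * ((D : Matrix (Fin 2) (Fin 2) ℂ))^2 = ((D : Matrix (Fin 2) (Fin 2) ℂ))^2 * M →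
      M * D = (D : Matrix (Fin 2) (Fin 2) ℂ) * M) :
    ¬∃ f : ZMod 3 → GL2, (∀ i, f i ∈ conjClass D) ∧ Function.Injective f ∧
      ∀ i j : ZMod 3, f (2 * j - i) = (f j)⁻¹ * f i * f j := by
  rintro ⟨f, hcls, hinj, hrel⟩
  have ha := hrel 0 1
  have hb := hrel 2 1
  rw [show (2*1-0 : ZMod 3) = 2 by decide] at ha
  rw [show (2*1-2 : ZMod 3) = 0 by decide] at hb
  have hfix : f 0 = (f 1)⁻¹ * ((f 1)⁻¹ * f 0 * f 1) * f 1 := by rw [← ha]; exact hb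
  have hcomm : f 0 * (f 1)^2 = (f 1)^2 * f 0 := by
    conv_rhs => rw [hfix]
    simp only [sq]; group
  have key : f 0 * f 1 = f 1 * f 0 :=
    comm_lift D hstep (f 0) (f 1) (hcls 1) hcomm
  have : f 2 = f 0 := by
    rw [ha, mul_assoc, key, inv_mul_cancel_left]
  exact absurd (hinj this) (by decide)

/-- The dihedral quandle `R₃ = (ℤ/3, i * j = 2j - i)` does not embed as a subquandle of the
conjugation quandle on the conjugacy class of `diag(λ₁, λ₂)` when `λ₁ ≠ ±λ₂` are nonzero,
nor into the conjugacy class of the Jordan block `[[λ, 1], [0, λ]]` for nonzero `λ`. -/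
theorem stmt18 :
    (∀ l1 l2 : ℂ, l1 ≠ 0 → l2 ≠ 0 → l1 ≠ l2 → l1 ≠ -l2 → ∀ D : GL2,
      (D : Matrix (Fin 2) (Fin 2) ℂ) = Matrix.diagonal ![l1, l2] →
      ¬∃ f : ZMod 3 → GL2, (∀ i, f i ∈ conjClass D) ∧ Function.Injective f ∧
        ∀ i j : ZMod 3, f (2 * j - i) = (f j)⁻¹ * f i * f j) ∧
    (∀ l : ℂ, l ≠ 0 → ∀ J : GL2,
      (J : Matrix (Fin 2) (Fin 2) ℂ) = !![l, 1; 0, l] →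
      ¬∃ f : ZMod 3 → GL2, (∀ i, f i ∈ conjClass J) ∧ Function.Injective f ∧
        ∀ i j : ZMod 3, f (2 * j - i) = (f j)⁻¹ * f i * f j) := by
  constructor
  · intro l1 l2 _ _ hne hne' D hD
    apply no_embed
    intro M hM
    rw [hD, diag_eq] at hM ⊢
    apply step_diag l1 l2 _ M hM
    intro h
    have : (l1 - l2) * (l1 + l2) = 0 := by linear_combination h
    rcases mul_eq_zero.mp this with h' | h'
    · exact hne (sub_eq_zero.mp h')
    · exact hne' (eq_neg_of_add_eq_zero_left h')
  · intro l hl J hJ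
    apply no_embed
    intro M hM
    rw [hJ] at hM ⊢
    exact step_jordan l hl M hM
end

section
/- For every nonzero λ ∈ ℂ, the dihedral quandle R₃ of order 3 is a subquandle of M_{λ,−λ}; that is, there exists an injective map f : ℤ/3 → M_{λ,−λ} satisfying f(2j − i) = f(j)⁻¹ f(i) f(j) for all i, j ∈ ℤ/3. -/
open Matrix

/-- For every nonzero `λ`, the dihedral quandle `R₃ = (ℤ/3, i * j = 2j - i)` embeds as a
subquandle of the conjugation quandle on the conjugacy class of `diag(λ, -λ)`. -/
theorem stmt19 (l : ℂ) (hl : l ≠ 0)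
    (D : GL2) (hD : (D : Matrix (Fin 2) (Fin 2) ℂ) = Matrix.diagonal ![l, -l]) :
    ∃ f : ZMod 3 → GL2, (∀ i, f i ∈ conjClass D) ∧ Function.Injective f ∧
      ∀ i j : ZMod 3, f (2 * j - i) = (f j)⁻¹ * f i * f j := by
  set ω : ℂ := Complex.exp (2 * Real.pi * Complex.I / 3) with hωdef
  have hω : IsPrimitiveRoot ω 3 := Complex.isPrimitiveRoot_exp 3 (by norm_num)
  have hω3 : ω ^ 3 = 1 := hω.pow_eq_one
  have hpow : ∀ n : ℕ, ω ^ n = ω ^ (n % 3) := by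
    intro n
    conv_lhs => rw [← Nat.div_add_mod n 3, pow_add, pow_mul, hω3, one_pow, one_mul]
  set w : ZMod 3 → ℂ := fun k => ω ^ k.val with hwdef
  have hw : ∀ a b : ZMod 3, w (a + b) = w a * w b := by
    intro a b
    simp only [hwdef, ← pow_add]
    rw [hpow (a + b).val, ZMod.val_add, Nat.mod_mod_of_dvd _ dvd_rfl, ← hpow]
  have hω0 : ω ≠ 0 := by
    intro h
    rw [h] at hω3
    simp at hω3
  have hw0 : ∀ k : ZMod 3, w k ≠ 0 := fun k => pow_ne_zero _ hω0
  have hw1 : ∀ k : ZMod 3, w k * w k ^ 2 = 1 := by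
    intro k
    have h : w k * w k ^ 2 = (ω ^ 3) ^ k.val := by rw [hwdef]; ring
    rw [h, hω3, one_pow]
  set M : ZMod 3 → Matrix (Fin 2) (Fin 2) ℂ := fun k => !![0, l * w k; l * w k ^ 2, 0]
    with hMdef
  have hdet : ∀ k, (M k).det ≠ 0 := by
    intro k
    rw [hMdef]
    simp only [Matrix.det_fin_two_of]
    have := hw1 k
    intro h
    apply hl
    have h2 : l * l * (w k * w k ^ 2) = 0 := by linear_combination -h
    rw [hw1 k, mul_one] at h2
    exact mul_self_eq_zero.mp h2
  set f : ZMod 3 → GL2 := fun k => Matrix.GeneralLinearGroup.mkOfDetNeZero (M k) (hdet k)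
    with hfdef
  have hfc : ∀ k, ((f k : GL2) : Matrix (Fin 2) (Fin 2) ℂ) = M k := fun k => rfl
  clear_value ω w M f
  refine ⟨f, ?_, ?_, ?_⟩
  · -- membership in the conjugacy class
    intro k
    have hdQ : (!![w k, -(w k); 1, 1] : Matrix (Fin 2) (Fin 2) ℂ).det ≠ 0 := by
      have h : (!![w k, -(w k); 1, 1] : Matrix (Fin 2) (Fin 2) ℂ).det = 2 * w k := by
        simp [Matrix.det_fin_two_of]; ring
      rw [h]
      exact mul_ne_zero two_ne_zero (hw0 k)
    set Pg : GL2 := Matrix.GeneralLinearGroup.mkOfDetNeZero _ hdQ with hPgdef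
    refine ⟨Pg⁻¹, ?_⟩
    have hPc : ((Pg : GL2) : Matrix (Fin 2) (Fin 2) ℂ) = !![w k, -(w k); 1, 1] := rfl
    rw [inv_inv, eq_mul_inv_iff_mul_eq]
    apply Matrix.GeneralLinearGroup.ext
    intro a b
    rw [Matrix.GeneralLinearGroup.coe_mul, Matrix.GeneralLinearGroup.coe_mul, hfc, hPc, hD]
    fin_cases a <;> fin_cases b <;>
      simp [hMdef, Matrix.mul_apply, Fin.sum_univ_two, Matrix.diagonal] <;>
      first
        | ring1
        | linear_combination l * hw1 k
  · -- injectivity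
    intro a b hab
    have h01 := congrArg (fun X : GL2 => (X : Matrix (Fin 2) (Fin 2) ℂ) 0 1) hab
    simp only [hfc, hMdef, Matrix.of_apply, Matrix.cons_val', Matrix.cons_val_zero,
      Matrix.cons_val_one, Matrix.head_cons, Matrix.empty_val', Matrix.cons_val_fin_one] at h01
    have hwab : w a = w b := mul_left_cancel₀ hl h01
    simp only [hwdef] at hwab
    have := hω.pow_inj (ZMod.val_lt a) (ZMod.val_lt b) hwab
    exact ZMod.val_injective 3 this
  · -- quandle relation
    intro i j
    have h3 : (3 : ZMod 3) = 0 := rfl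
    have e1 : j + ((2 * j - i) + (2 * j - i)) = i + (j + j) := by
      linear_combination (j - i) * h3
    have e2 : j + (j + (2 * j - i)) = i + (i + j) := by
      linear_combination (j - i) * h3
    have q1 : w j * (w (2 * j - i) * w (2 * j - i)) = w i * (w j * w j) := by
      rw [← hw, ← hw, ← hw, ← hw, e1]
    have q2 : w j * (w j * w (2 * j - i)) = w i * (w i * w j) := by
      rw [← hw, ← hw, ← hw, ← hw, e2]
    rw [mul_assoc, eq_inv_mul_iff_mul_eq]
    apply Matrix.GeneralLinearGroup.ext
    intro a b
    rw [Matrix.GeneralLinearGroup.coe_mul, Matrix.GeneralLinearGroup.coe_mul, hfc, hfc,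
      hfc]
    fin_cases a <;> fin_cases b <;>
      simp [hMdef, Matrix.mul_apply, Fin.sum_univ_two] <;>
      first
        | ring1
        | linear_combination l ^ 2 * q1
        | linear_combination l ^ 2 * q2
end
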